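/- arXiv:1711.11218 — 8 statements merged into one kernel-verified Lean document; each statement's English description precedes it below -/
import Mathlib

section
/- Define g : ℝ → ℝ by g(s) = (1/s) ∫_{ℝⁿ} 1{x₁ + ⋯ + xₙ ≤ s} (⟨x, ∇f(x)⟩ + n·f(x)) dx for s ≠ 0, and g(0) = 0. Then g is a probability density of the sum S = X₁ + ⋯ + Xₙ: for every s ∈ ℝ, μ({x ∈ ℝⁿ : x₁ + ⋯ + xₙ ≤ s}) = ∫_{−∞}^{s} g(t) dt. -/
/-!
Let `L` be a nonzero linear functional (here `x₁ + ⋯ + xₙ`), `F t = ∫_{L ≤ t} f`, and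
`D x = ⟨x, ∇f x⟩ + n f x`, the divergence of the vector field `x ↦ f x • x`. For `τ > 0`,
`F (τ s) = ∫_{L ≤ s} τⁿ f (τ x) dx` and `d/dτ (τⁿ f (τ x)) = τⁿ⁻¹ D (τ x)`. Integrating in `τ`
and exchanging the order of integration gives `F (b s) - F (a s) = ∫_a^b τ⁻¹ G (τ s) dτ` with
`G t = ∫_{L ≤ t} D`. Hyperplanes are null, so `G` is continuous and `F` has derivative
`G s / s = g s` at every `s ≠ 0`. Since `F` is continuous, nondecreasing and tends to `0` at
`-∞`, its nonnegative derivative `g` is integrable on `(-∞, s]` with integral `F s`; the one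
point `0` where `F` may fail to be differentiable does not matter.
-/

open MeasureTheory Set Filter Topology Module
open scoped Pointwise

theorem pow_pred_mul_inv_pow {G₀ : Type*} [CommGroupWithZero G₀] {τ : G₀} {d : ℕ} (hd : d ≠ 0)
    (hτ : τ ≠ 0) : τ ^ (d - 1) * (τ ^ d)⁻¹ = τ⁻¹ := by
  rw [pow_sub₀ _ hτ (Nat.one_le_iff_ne_zero.2 hd), pow_one, mul_right_comm,
    mul_inv_cancel₀ (pow_ne_zero _ hτ), one_mul]

section RealLine

variable {F F' : ℝ → ℝ} {c : ℝ}

theorem intervalIntegrable_deriv_of_nonneg_off_point (hF : Continuous F)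
    (hderiv : ∀ t ≠ c, HasDerivAt F (F' t) t) (hpos : ∀ t ≠ c, 0 ≤ F' t) (a b : ℝ) :
    IntervalIntegrable F' volume a b := by
  have hc : ∀ u, ∀ t ∈ Ioo (min u c) (max u c), t ≠ c := by
    rintro u t ht rfl
    simp only [mem_Ioo, min_lt_iff, lt_max_iff, lt_self_iff_false, or_false] at ht
    exact ht.1.not_gt ht.2
  have key : ∀ u, IntervalIntegrable F' volume u c := fun u =>
    intervalIntegral.intervalIntegrable_deriv_of_nonneg hF.continuousOn
      (fun t ht => hderiv t (hc u t ht)) (fun t ht => hpos t (hc u t ht))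
  exact (key a).trans (key b).symm

theorem integral_Iic_of_hasDerivAt_off_point_of_nonneg {m : ℝ} (hF : Continuous F)
    (hderiv : ∀ t ≠ c, HasDerivAt F (F' t) t) (hpos : ∀ t ≠ c, 0 ≤ F' t)
    (hbot : Tendsto F atBot (𝓝 m)) (s : ℝ) :
    ∫ t in Iic s, F' t = F s - m := by
  have hint := intervalIntegrable_deriv_of_nonneg_off_point hF hderiv hpos
  have hftc : ∀ a, ∫ t in a..s, F' t = F s - F a := fun a =>
    integral_eq_of_hasDerivAt_off_countable F F' (countable_singleton c) hF.continuousOn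
      (fun t ht => hderiv t ht.2) (hint a s)
  have hlim : Tendsto (fun a => ∫ t in a..s, F' t) atBot (𝓝 (F s - m)) := by
    simpa only [hftc] using tendsto_const_nhds.sub hbot
  have hnorm : ∀ a, ∫ t in a..s, ‖F' t‖ = ∫ t in a..s, F' t := fun a =>
    intervalIntegral.integral_congr_ae <| by
      filter_upwards [compl_mem_ae_iff.2 (measure_singleton c)] with t ht _
      exact Real.norm_of_nonneg (hpos t ht)
  have hIic : IntegrableOn F' (Iic s) :=
    integrableOn_Iic_of_intervalIntegral_norm_tendsto _ s (fun a => (hint a s).1) tendsto_id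
      (by simpa only [hnorm] using hlim)
  exact tendsto_nhds_unique (intervalIntegral_tendsto_integral_Iic s hIic tendsto_id) hlim

end RealLine

section LevelSets

variable {X : Type*} [MeasurableSpace X] {μ : Measure X} {φ : X → ℝ} {h : X → ℝ}

theorem continuous_setIntegral_setOf_le (hφ : Measurable φ) (hnull : ∀ c, μ {x | φ x = c} = 0)
    (hh : Integrable h μ) : Continuous fun t => ∫ x in {x | φ x ≤ t}, h x ∂μ := by
  simp_rw [← integral_indicator (measurableSet_le hφ measurable_const)]
  refine continuous_iff_continuousAt.2 fun t₀ => continuousAt_of_dominated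
    (.of_forall fun t => hh.aestronglyMeasurable.indicator (measurableSet_le hφ measurable_const))
    (.of_forall fun t => .of_forall fun x => norm_indicator_le_norm_self _ _) hh.norm ?_
  filter_upwards [compl_mem_ae_iff.2 (hnull t₀)] with x hx
  rcases lt_or_gt_of_ne (hx : φ x ≠ t₀) with hlt | hgt
  · refine continuousAt_const.congr (f := fun _ => h x) ?_
    filter_upwards [Ioi_mem_nhds hlt] with t ht
    exact (indicator_of_mem (s := {x | φ x ≤ t}) (mem_Ioi.1 ht).le h).symm
  · refine continuousAt_const.congr (f := fun _ => 0) ?_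
    filter_upwards [Iio_mem_nhds hgt] with t ht
    exact (indicator_of_notMem (s := {x | φ x ≤ t}) (not_le.2 (mem_Iio.1 ht)) h).symm

theorem tendsto_setIntegral_setOf_le_atBot (hφ : Measurable φ) (hh : Integrable h μ) :
    Tendsto (fun t => ∫ x in {x | φ x ≤ t}, h x ∂μ) atBot (𝓝 0) := by
  simp_rw [← integral_indicator (measurableSet_le hφ measurable_const)]
  rw [← integral_zero X ℝ]
  refine tendsto_integral_filter_of_dominated_convergence _
    (.of_forall fun t => hh.aestronglyMeasurable.indicator (measurableSet_le hφ measurable_const))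
    (.of_forall fun t => .of_forall fun x => norm_indicator_le_norm_self _ _) hh.norm
    (.of_forall fun x => tendsto_const_nhds.congr' ?_)
  filter_upwards [Iio_mem_atBot (φ x)] with t ht
  exact (indicator_of_notMem (s := {x | φ x ≤ t}) (not_le.2 (mem_Iio.1 ht)) h).symm

end LevelSets

section LinearFunctional

variable {E : Type*} [NormedAddCommGroup E] [NormedSpace ℝ E] {L : E →L[ℝ] ℝ}

theorem smul_setOf_le {c : ℝ} (hc : 0 < c) (s : ℝ) :
    c • {x | L x ≤ s} = {x | L x ≤ c * s} := by
  ext x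
  simp [mem_smul_set_iff_inv_smul_mem₀ hc.ne', inv_mul_le_iff₀ hc]

variable [FiniteDimensional ℝ E] [MeasurableSpace E] [BorelSpace E] (μ : Measure E)
  [μ.IsAddHaarMeasure]

theorem addHaar_setOf_eq_eq_zero (hL : L ≠ 0) (c : ℝ) : μ {x | L x = c} = 0 := by
  obtain ⟨v, hv⟩ : ∃ v, L v ≠ 0 := by simpa [DFunLike.ext_iff] using hL
  set x₀ := (c / L v) • v
  have hx₀ : L x₀ = c := by simp [x₀, div_mul_cancel₀ _ hv]
  have hker : LinearMap.ker (L : E →ₗ[ℝ] ℝ) ≠ ⊤ := by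
    rw [Ne, LinearMap.ker_eq_top]
    exact_mod_cast hL
  have hset : {x | L x = c} = (· + -x₀) ⁻¹' (LinearMap.ker (L : E →ₗ[ℝ] ℝ)) := by
    ext x; simp [hx₀, sub_eq_zero, ← sub_eq_add_neg]
  rw [hset, measure_preimage_add_right]
  exact Measure.addHaar_submodule μ _ hker

end LinearFunctional

section RadialDivergence

variable {E : Type*} [NormedAddCommGroup E] [NormedSpace ℝ E]

noncomputable def radialDivergence (f : E → ℝ) (x : E) : ℝ :=
  fderiv ℝ f x x + finrank ℝ E * f x

theorem continuous_radialDivergence {f : E → ℝ} (hf : ContDiff ℝ 1 f) :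
    Continuous (radialDivergence f) :=
  ((hf.continuous_fderiv one_ne_zero).clm_apply continuous_id).add
    (continuous_const.mul hf.continuous)

variable [FiniteDimensional ℝ E]

theorem hasDerivAt_pow_finrank_mul_comp_smul [Nontrivial E] {f : E → ℝ}
    (hf : Differentiable ℝ f) (x : E) (τ : ℝ) :
    HasDerivAt (fun t : ℝ => t ^ finrank ℝ E * f (t • x))
      (τ ^ (finrank ℝ E - 1) * radialDivergence f (τ • x)) τ := by
  have hcomp : HasDerivAt (fun t : ℝ => f (t • x)) (fderiv ℝ f (τ • x) x) τ :=
    (hf (τ • x)).hasFDerivAt.comp_hasDerivAt τ (by simpa using (hasDerivAt_id τ).smul_const x)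
  refine ((hasDerivAt_pow (finrank ℝ E) τ).mul hcomp).congr_deriv ?_
  obtain ⟨d, hd⟩ := Nat.exists_eq_add_one.2 (finrank_pos (R := ℝ) (M := E))
  simp only [radialDivergence]
  rw [map_smul, smul_eq_mul, hd, Nat.add_sub_cancel, pow_succ]
  push_cast
  ring

variable [MeasurableSpace E] [BorelSpace E] {μ : Measure E} [μ.IsAddHaarMeasure] {f : E → ℝ}

theorem integrable_pow_mul_radialDivergence_comp_smul [Nontrivial E] (hf : ContDiff ℝ 1 f)
    (hD : Integrable (radialDivergence f) μ) {a : ℝ} (ha : 0 < a) (b : ℝ) :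
    Integrable (fun p : ℝ × E => p.1 ^ (finrank ℝ E - 1) * radialDivergence f (p.1 • p.2))
      ((volume.restrict (Ioc a b)).prod μ) := by
  have hpos : ∀ τ ∈ Ioc a b, 0 < τ := fun τ hτ => ha.trans hτ.1
  have hnorm : EqOn (fun τ => τ⁻¹ * ∫ x, ‖radialDivergence f x‖ ∂μ)
      (fun τ => ∫ x, ‖τ ^ (finrank ℝ E - 1) * radialDivergence f (τ • x)‖ ∂μ) (Ioc a b) := by
    intro τ hτ
    simp only [norm_mul, integral_const_mul, norm_pow, Real.norm_of_nonneg (hpos τ hτ).le]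
    rw [Measure.integral_comp_smul_of_nonneg μ (fun x => ‖radialDivergence f x‖) τ
      (hR := (hpos τ hτ).le), smul_eq_mul, ← mul_assoc,
      pow_pred_mul_inv_pow finrank_pos.ne' (hpos τ hτ).ne']
  have hcont : Continuous fun p : ℝ × E =>
      p.1 ^ (finrank ℝ E - 1) * radialDivergence f (p.1 • p.2) := by
    have := continuous_radialDivergence hf
    fun_prop
  refine (integrable_prod_iff hcont.aestronglyMeasurable).2 ⟨?_, ?_⟩
  · filter_upwards [ae_restrict_mem measurableSet_Ioc] with τ hτ
    exact (hD.comp_smul (hpos τ hτ).ne').const_mul _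
  · refine IntegrableOn.congr_fun ?_ hnorm measurableSet_Ioc
    exact ((continuousOn_inv₀.mono fun τ hτ => (ha.trans_le hτ.1).ne').mul
      continuousOn_const).integrableOn_Icc.mono_set Ioc_subset_Icc_self

theorem setIntegral_smul_sub_setIntegral_smul [Nontrivial E] (hf : ContDiff ℝ 1 f)
    (hfi : Integrable f μ) (hD : Integrable (radialDivergence f) μ) (A : Set E) {a b : ℝ}
    (ha : 0 < a) (hab : a ≤ b) :
    ∫ x in b • A, f x ∂μ - ∫ x in a • A, f x ∂μ =
      ∫ τ in a..b, τ⁻¹ * ∫ x in τ • A, radialDivergence f x ∂μ := by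
  set d := finrank ℝ E
  have hscale : ∀ {c : ℝ}, 0 < c → ∫ x in A, c ^ d * f (c • x) ∂μ = ∫ x in c • A, f x ∂μ :=
    fun hc => by
      rw [integral_const_mul, Measure.setIntegral_comp_smul_of_pos _ _ _ hc, smul_eq_mul,
        ← mul_assoc, mul_inv_cancel₀ (pow_pos hc _).ne', one_mul]
  have hftc : ∀ x, ∫ τ in Ioc a b, τ ^ (d - 1) * radialDivergence f (τ • x) =
      b ^ d * f (b • x) - a ^ d * f (a • x) := fun x => by
    rw [← intervalIntegral.integral_of_le hab]
    refine intervalIntegral.integral_eq_sub_of_hasDerivAt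
      (fun τ _ => hasDerivAt_pow_finrank_mul_comp_smul (hf.differentiable one_ne_zero) x τ) ?_
    have := continuous_radialDivergence hf
    exact Continuous.intervalIntegrable (by fun_prop) a b
  have hprod := (integrable_pow_mul_radialDivergence_comp_smul hf hD ha b).mono_measure
    (Measure.prod_mono le_rfl (Measure.restrict_le_self (s := A)))
  calc ∫ x in b • A, f x ∂μ - ∫ x in a • A, f x ∂μ
      = ∫ x in A, (b ^ d * f (b • x) - a ^ d * f (a • x)) ∂μ := by
        rw [integral_sub ((hfi.comp_smul (ha.trans_le hab).ne').const_mul _).integrableOn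
          ((hfi.comp_smul ha.ne').const_mul _).integrableOn, hscale (ha.trans_le hab), hscale ha]
    _ = ∫ x in A, ∫ τ in Ioc a b, τ ^ (d - 1) * radialDivergence f (τ • x) ∂volume ∂μ := by
        simp_rw [hftc]
    _ = ∫ τ in Ioc a b, ∫ x in A, τ ^ (d - 1) * radialDivergence f (τ • x) ∂μ ∂volume :=
        (integral_integral_swap hprod).symm
    _ = ∫ τ in a..b, τ⁻¹ * ∫ x in τ • A, radialDivergence f x ∂μ := by
        rw [intervalIntegral.integral_of_le hab]
        refine setIntegral_congr_fun measurableSet_Ioc fun τ hτ => ?_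
        have hτ : 0 < τ := ha.trans hτ.1
        rw [integral_const_mul, Measure.setIntegral_comp_smul_of_pos _ _ _ hτ, smul_eq_mul,
          ← mul_assoc, pow_pred_mul_inv_pow finrank_pos.ne' hτ.ne']

theorem hasDerivAt_setIntegral_smul [Nontrivial E] (hf : ContDiff ℝ 1 f) (hfi : Integrable f μ)
    (hD : Integrable (radialDivergence f) μ) {A : Set E}
    (hcont : ContinuousOn (fun τ : ℝ => ∫ x in τ • A, radialDivergence f x ∂μ) (Ioi 0)) {τ : ℝ}
    (hτ : 0 < τ) :
    HasDerivAt (fun t => ∫ x in t • A, f x ∂μ)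
      (τ⁻¹ * ∫ x in τ • A, radialDivergence f x ∂μ) τ := by
  set k := fun t : ℝ => t⁻¹ * ∫ x in t • A, radialDivergence f x ∂μ
  have hk : ContinuousOn k (Ioi 0) := (continuousOn_inv₀.mono fun t ht => ne_of_gt ht).mul hcont
  have hint : IntervalIntegrable k volume (τ / 2) τ := by
    refine (hk.mono fun t ht => ?_).intervalIntegrable
    rw [uIcc_of_le (half_le_self hτ.le)] at ht
    exact (half_pos hτ).trans_le ht.1
  have hderiv := ((intervalIntegral.integral_hasDerivAt_right hint
    (hk.stronglyMeasurableAtFilter isOpen_Ioi τ hτ) (hk.continuousAt (Ioi_mem_nhds hτ))).const_add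
    (∫ x in (τ / 2) • A, f x ∂μ))
  refine hderiv.congr_of_eventuallyEq ?_
  filter_upwards [Ioi_mem_nhds (half_lt_self hτ)] with t ht
  rw [← setIntegral_smul_sub_setIntegral_smul hf hfi hD A (half_pos hτ) (mem_Ioi.1 ht).le]
  ring

end RadialDivergence

section SublevelSets

variable {E : Type*} [NormedAddCommGroup E] [NormedSpace ℝ E] [FiniteDimensional ℝ E]
  [MeasurableSpace E] [BorelSpace E] (μ : Measure E) [μ.IsAddHaarMeasure] {L : E →L[ℝ] ℝ}
  {f : E → ℝ}

theorem hasDerivAt_setIntegral_setOf_le (hf : ContDiff ℝ 1 f) (hfi : Integrable f μ)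
    (hD : Integrable (radialDivergence f) μ) (hL : L ≠ 0) {s : ℝ} (hs : s ≠ 0) :
    HasDerivAt (fun t => ∫ x in {x | L x ≤ t}, f x ∂μ)
      (s⁻¹ * ∫ x in {x | L x ≤ s}, radialDivergence f x ∂μ) s := by
  obtain ⟨v, hv⟩ : ∃ v, L v ≠ 0 := by simpa [DFunLike.ext_iff] using hL
  have : Nontrivial E := nontrivial_of_ne v 0 fun h => hv (by simp [h])
  have hG := continuous_setIntegral_setOf_le L.measurable (addHaar_setOf_eq_eq_zero μ hL) hD
  have hcont : ContinuousOn (fun τ : ℝ => ∫ x in τ • {x | L x ≤ s}, radialDivergence f x ∂μ)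
      (Ioi 0) :=
    (hG.comp (continuous_mul_const s)).continuousOn.congr fun τ hτ => by
      simp only [smul_setOf_le hτ, Function.comp_apply]
  have h1 : HasDerivAt (fun τ => ∫ x in τ • {x | L x ≤ s}, f x ∂μ)
      (∫ x in {x | L x ≤ s}, radialDivergence f x ∂μ) (s / s) := by
    simpa [div_self hs] using hasDerivAt_setIntegral_smul hf hfi hD hcont one_pos
  have h2 := h1.comp (h := fun t => t / s) s ((hasDerivAt_id' s).div_const s)
  rw [mul_one_div, div_eq_inv_mul] at h2
  refine h2.congr_of_eventuallyEq ?_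
  filter_upwards [((continuous_id'.div_const s).tendsto s).eventually
    (lt_mem_nhds (by simp [div_self hs] : (0 : ℝ) < s / s))] with t ht
  rw [Function.comp_apply, smul_setOf_le ht, div_mul_cancel₀ _ hs]

theorem integral_Iic_inv_mul_setIntegral_radialDivergence (hf : ContDiff ℝ 1 f)
    (hf_nonneg : ∀ x, 0 ≤ f x) (hfi : Integrable f μ) (hD : Integrable (radialDivergence f) μ)
    (hL : L ≠ 0) (s : ℝ) :
    ∫ t in Iic s, t⁻¹ * ∫ x in {x | L x ≤ t}, radialDivergence f x ∂μ =
      ∫ x in {x | L x ≤ s}, f x ∂μ := by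
  have hmono : Monotone fun t => ∫ x in {x | L x ≤ t}, f x ∂μ := fun a b hab =>
    setIntegral_mono_set hfi.integrableOn (.of_forall hf_nonneg)
      (LE.le.eventuallyLE fun x (hx : L x ≤ a) => hx.trans hab)
  have hderiv := fun t (ht : t ≠ 0) => hasDerivAt_setIntegral_setOf_le μ hf hfi hD hL ht
  simpa using integral_Iic_of_hasDerivAt_off_point_of_nonneg
    (continuous_setIntegral_setOf_le L.measurable (addHaar_setOf_eq_eq_zero μ hL) hfi) hderiv
    (fun t ht => (hderiv t ht).deriv ▸ hmono.deriv_nonneg)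
    (tendsto_setIntegral_setOf_le_atBot L.measurable hfi) s

end SublevelSets

/-- Let `f` be a continuously differentiable probability density on `ℝⁿ`
(`n ≥ 1`) with `∫ |⟨x, ∇f(x)⟩| dx < ∞`, and let `μ` be the law of `X ∼ f`.  Define
`g(s) = (1/s) ∫ 1{x₁+⋯+xₙ ≤ s} (⟨x, ∇f(x)⟩ + n f(x)) dx` for `s ≠ 0` and `g(0) = 0`.
Then `g` is a probability density of `S = X₁ + ⋯ + Xₙ`. -/
theorem sum_density_sensitivity_indicator_le
    (n : ℕ) (hn : 1 ≤ n)
    (f : EuclideanSpace ℝ (Fin n) → ℝ)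
    (hf_nonneg : ∀ x, 0 ≤ f x)
    (hf_diff : ContDiff ℝ 1 f)
    (hf_prob : ∫ x, f x = 1)
    (hf_int : Integrable (fun x : EuclideanSpace ℝ (Fin n) => (inner ℝ x (gradient f x) : ℝ)))
    (μ : Measure (EuclideanSpace ℝ (Fin n)))
    (hμ : μ = volume.withDensity (fun x => ENNReal.ofReal (f x)))
    (g : ℝ → ℝ)
    (hg : ∀ s : ℝ, s ≠ 0 → g s =
      (1 / s) * ∫ x : EuclideanSpace ℝ (Fin n),
        Set.indicator {y : EuclideanSpace ℝ (Fin n) | ∑ i, y i ≤ s}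
          (fun y => (inner ℝ y (gradient f y) : ℝ) + n * f y) x)
    (hg0 : g 0 = 0) :
    ∀ s : ℝ, μ {x | ∑ i, x i ≤ s} = ENNReal.ofReal (∫ t in Set.Iic s, g t) := by
  set L : EuclideanSpace ℝ (Fin n) →L[ℝ] ℝ := ∑ i, EuclideanSpace.proj i
  have hL : ∀ t, {x | L x ≤ t} = {x : EuclideanSpace ℝ (Fin n) | ∑ i, x i ≤ t} := by
    simp [L]
  have hL0 : L ≠ 0 := fun h => by
    simpa [L] using congr($h (EuclideanSpace.single ⟨0, hn⟩ 1))
  have hfi : Integrable f := .of_integral_ne_zero (by simp [hf_prob])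
  have hD : (fun y => (inner ℝ y (gradient f y) : ℝ) + n * f y) = radialDivergence f := by
    funext y
    simp [radialDivergence, inner_gradient_right]
  -- at `t = 0` the junk value `0⁻¹ = 0` agrees with `g 0 = 0`
  have hg' : g = fun t => t⁻¹ * ∫ x in {x | L x ≤ t}, radialDivergence f x := by
    funext t
    rcases eq_or_ne t 0 with rfl | ht
    · simp [hg0]
    · rw [hg t ht, one_div, hD, hL,
        integral_indicator (measurableSet_le (by fun_prop) (by fun_prop))]
  intro s
  rw [hμ, withDensity_apply _ (hL s ▸ measurableSet_le L.measurable measurable_const),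
    ← ofReal_integral_eq_lintegral_ofReal hfi.integrableOn (.of_forall hf_nonneg), hg',
    integral_Iic_inv_mul_setIntegral_radialDivergence volume hf_diff hf_nonneg hfi
      (hD ▸ hf_int.add (hfi.const_mul _)) hL0 s, hL]
end

section
/- Define g̃ : ℝ → ℝ by g̃(s) = −(1/s) ∫_{ℝⁿ} 1{x₁ + ⋯ + xₙ > s} (⟨x, ∇f(x)⟩ + n·f(x)) dx for s ≠ 0, and g̃(0) = 0. Then g̃ is a probability density of the sum S = X₁ + ⋯ + Xₙ: for every s ∈ ℝ, μ({x ∈ ℝⁿ : x₁ + ⋯ + xₙ ≤ s}) = ∫_{−∞}^{s} g̃(t) dt. -/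
open MeasureTheory Set Filter Topology Module
open scoped Pointwise

/-! Let `H(u) = ∫_{L x > u} f` be the upper tail of the linear form `L = x₁ + ⋯ + xₙ`. Scaling
`x ↦ c x` gives `∫_{L x > t} f(c x) dx = c⁻ⁿ H(c t)`; differentiating in `c` along rays and
swapping the integrals by Fubini (this is where `⟨x, ∇f⟩ ∈ L¹` enters) gives
`u H'(u) = n H(u) + ∫_{L x > u} ⟨x, ∇f(x)⟩ dx` for `u ≠ 0`. So the distribution function
`1 - H` of the sum is continuous, nondecreasing, vanishes at `-∞` and has derivative `g̃` off `0`,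
and such a function is the integral of its derivative. -/

section RadialDeriv

variable {E : Type*} [NormedAddCommGroup E] [NormedSpace ℝ E] {f : E → ℝ}

noncomputable def radialDeriv (f : E → ℝ) (x : E) : ℝ := fderiv ℝ f x x

theorem hasDerivAt_comp_smul (hf : Differentiable ℝ f) (x : E) (c : ℝ) :
    HasDerivAt (fun c : ℝ => f (c • x)) (fderiv ℝ f (c • x) x) c :=
  (hf (c • x)).hasFDerivAt.comp_hasDerivAt c (by simpa using (hasDerivAt_id c).smul_const x)

theorem fderiv_smul_apply_self {c : ℝ} (hc : c ≠ 0) (x : E) :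
    fderiv ℝ f (c • x) x = c⁻¹ * radialDeriv f (c • x) := by
  rw [radialDeriv, map_smul, smul_eq_mul, inv_mul_cancel_left₀ hc]

theorem inner_self_gradient {F : Type*} [NormedAddCommGroup F] [InnerProductSpace ℝ F]
    [CompleteSpace F] (f : F → ℝ) (x : F) : inner ℝ x (gradient f x) = radialDeriv f x := by
  rw [gradient, real_inner_comm, InnerProductSpace.toDual_symm_apply, radialDeriv]

end RadialDeriv

theorem integrableOn_Iic_of_monotone_of_hasDerivAt {F g : ℝ → ℝ} {s : ℝ} (hmono : Monotone F)
    (hcont : Continuous F) (hbot : Tendsto F atBot (𝓝 0))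
    (hderiv : ∀ x < s, HasDerivAt F (g x) x) : IntegrableOn g (Iic s) := by
  have hg : ∀ x < s, 0 ≤ g x := fun x hx => (hderiv x hx).deriv ▸ hmono.deriv_nonneg
  have hIoc : ∀ a, IntegrableOn g (Ioc a s) := fun a =>
    intervalIntegral.integrableOn_deriv_of_nonneg hcont.continuousOn
      (fun x hx => hderiv x hx.2) (fun x hx => hg x hx.2)
  refine integrableOn_Iic_of_intervalIntegral_norm_bounded (F s) s hIoc tendsto_id ?_
  filter_upwards [eventually_le_atBot s] with a has
  have hFTC : ∫ x in a..s, g x = F s - F a :=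
    intervalIntegral.integral_eq_sub_of_hasDerivAt_of_le has hcont.continuousOn
      (fun x hx => hderiv x hx.2) ((intervalIntegrable_iff_integrableOn_Ioc_of_le has).2 (hIoc a))
  calc ∫ x in a..s, ‖g x‖
      = ∫ x in a..s, g x := by
        refine intervalIntegral.integral_congr_ae ?_
        filter_upwards [volume.ae_ne s] with x hxs hx
        rw [uIoc_of_le has] at hx
        exact Real.norm_of_nonneg (hg x (hx.2.lt_of_ne hxs))
    _ ≤ F s := by rw [hFTC]; linarith [hmono.le_of_tendsto hbot a]

theorem integral_Iic_eq_of_monotone_of_hasDerivAt_ne {F g : ℝ → ℝ} {a : ℝ} (hmono : Monotone F)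
    (hcont : Continuous F) (hbot : Tendsto F atBot (𝓝 0))
    (hderiv : ∀ x ≠ a, HasDerivAt F (g x) x) (s : ℝ) : ∫ x in Iic s, g x = F s := by
  have hIic : ∀ b ≤ a, IntegrableOn g (Iic b) ∧ ∫ x in Iic b, g x = F b := fun b hb => by
    have hderiv' : ∀ x < b, HasDerivAt F (g x) x := fun x hx => hderiv x (hx.trans_le hb).ne
    have hint := integrableOn_Iic_of_monotone_of_hasDerivAt hmono hcont hbot hderiv'
    exact ⟨hint, by rw [integral_Iic_of_hasDerivAt_of_tendsto hcont.continuousWithinAt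
      hderiv' hint hbot, sub_zero]⟩
  rcases le_or_gt s a with hs | hs
  · exact (hIic s hs).2
  have hderiv' : ∀ x ∈ Ioo a s, HasDerivAt F (g x) x := fun x hx => hderiv x hx.1.ne'
  have hIoc : IntegrableOn g (Ioc a s) :=
    intervalIntegral.integrableOn_deriv_of_nonneg hcont.continuousOn hderiv'
      (fun x hx => (hderiv' x hx).deriv ▸ hmono.deriv_nonneg)
  have hFTC : ∫ x in Ioc a s, g x = F s - F a := by
    rw [← intervalIntegral.integral_of_le hs.le]
    exact intervalIntegral.integral_eq_sub_of_hasDerivAt_of_le hs.le hcont.continuousOn hderiv'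
      ((intervalIntegrable_iff_integrableOn_Ioc_of_le hs.le).2 hIoc)
  rw [← Iic_union_Ioc_eq_Iic hs.le, setIntegral_union (Iic_disjoint_Ioc le_rfl) measurableSet_Ioc
    (hIic a le_rfl).1 hIoc, (hIic a le_rfl).2, hFTC, add_sub_cancel]

section UpperTail

variable {E : Type*} [NormedAddCommGroup E] [NormedSpace ℝ E] [MeasurableSpace E]
  (μ : Measure E) (L : E →L[ℝ] ℝ) {f : E → ℝ}

noncomputable def upperTail (φ : E → ℝ) (u : ℝ) : ℝ := ∫ x in {x | u < L x}, φ x ∂μ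

variable {μ L}

theorem monotone_setIntegral_le {φ : E → ℝ} (hφ0 : 0 ≤ φ) (hφ : Integrable φ μ) :
    Monotone fun s => ∫ x in {x | L x ≤ s}, φ x ∂μ := fun _ _ hst =>
  setIntegral_mono_set hφ.integrableOn (.of_forall hφ0)
    (LE.le.eventuallyLE fun _ hx => le_trans hx hst)

variable [BorelSpace E]

theorem measurableSet_lt_apply (u : ℝ) : MeasurableSet {x | u < L x} :=
  measurableSet_lt measurable_const L.measurable

theorem upperTail_eq_integral_indicator (φ : E → ℝ) :
    upperTail μ L φ = fun u => ∫ x, {x | u < L x}.indicator φ x ∂μ :=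
  funext fun u => (integral_indicator (measurableSet_lt_apply u)).symm

theorem tendsto_upperTail_atBot {φ : E → ℝ} (hφ : Integrable φ μ) :
    Tendsto (upperTail μ L φ) atBot (𝓝 (∫ x, φ x ∂μ)) := by
  rw [upperTail_eq_integral_indicator]
  refine tendsto_integral_filter_of_dominated_convergence (l := atBot) (fun x => ‖φ x‖)
    (.of_forall fun u => hφ.aestronglyMeasurable.indicator (measurableSet_lt_apply u))
    (.of_forall fun u => .of_forall fun x => norm_indicator_le_norm_self _ _) hφ.norm
    (.of_forall fun x => tendsto_const_nhds.congr' ?_)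
  filter_upwards [eventually_lt_atBot (L x)] with u hu
  simp [indicator_of_mem, hu]

theorem setIntegral_le_eq_sub_upperTail {φ : E → ℝ} (hφ : Integrable φ μ) (s : ℝ) :
    ∫ x in {x | L x ≤ s}, φ x ∂μ = ∫ x, φ x ∂μ - upperTail μ L φ s := by
  have hcompl : {x | L x ≤ s}ᶜ = {x | s < L x} := by ext; simp
  rw [eq_sub_iff_add_eq, upperTail, ← hcompl,
    integral_add_compl (measurableSet_le L.measurable measurable_const) hφ]

variable [FiniteDimensional ℝ E] [μ.IsAddHaarMeasure]

theorem ae_apply_ne_of_surjective (hL : Function.Surjective L) (c : ℝ) : ∀ᵐ x ∂μ, L x ≠ c :=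
  (ae_comp_linearMap_mem_iff (L : E →ₗ[ℝ] ℝ) μ volume hL (measurableSet_singleton c).compl).2
    (volume.ae_ne c)

theorem continuous_upperTail (hL : Function.Surjective L) {φ : E → ℝ} (hφ : Integrable φ μ) :
    Continuous (upperTail μ L φ) := by
  rw [upperTail_eq_integral_indicator]
  refine continuous_iff_continuousAt.2 fun u₀ => ?_
  refine tendsto_integral_filter_of_dominated_convergence (l := 𝓝 u₀) (fun x => ‖φ x‖)
    (.of_forall fun u => hφ.aestronglyMeasurable.indicator (measurableSet_lt_apply u))
    (.of_forall fun u => .of_forall fun x => norm_indicator_le_norm_self _ _) hφ.norm ?_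
  filter_upwards [ae_apply_ne_of_surjective hL u₀] with x hx
  refine tendsto_const_nhds.congr' ?_
  rcases hx.lt_or_gt with h | h
  · filter_upwards [eventually_gt_nhds h] with u hu
    simp [indicator_of_notMem, h.not_gt, hu.not_gt]
  · filter_upwards [eventually_lt_nhds h] with u hu
    simp [indicator_of_mem, h, hu]

theorem setIntegral_lt_comp_smul {φ : E → ℝ} {c : ℝ} (hc : 0 < c) (t : ℝ) :
    ∫ x in {x | t < L x}, φ (c • x) ∂μ = (c ^ finrank ℝ E)⁻¹ * upperTail μ L φ (c * t) := by
  have hset : c • {x | t < L x} = {y | c * t < L y} := by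
    ext y
    rw [mem_smul_set_iff_inv_smul_mem₀ hc.ne', mem_ofPred_eq, mem_ofPred_eq, L.map_smul,
      smul_eq_mul, lt_inv_mul_iff₀ hc]
  rw [Measure.setIntegral_comp_smul_of_pos μ φ _ hc, hset, smul_eq_mul, upperTail]

theorem setIntegral_fderiv_comp_smul {c : ℝ} (hc : 0 < c) (t : ℝ) :
    ∫ x in {x | t < L x}, fderiv ℝ f (c • x) x ∂μ
      = (c ^ (finrank ℝ E + 1))⁻¹ * upperTail μ L (radialDeriv f) (c * t) := by
  simp_rw [fderiv_smul_apply_self hc.ne']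
  rw [integral_const_mul, setIntegral_lt_comp_smul hc, pow_succ, mul_inv_rev, mul_assoc]

theorem integrable_fderiv_comp_smul_prod (hf : ContDiff ℝ 1 f)
    (hψ : Integrable (radialDeriv f) μ) {a b : ℝ} (ha : 0 < a) :
    Integrable (fun p : E × ℝ => fderiv ℝ f (p.2 • p.1) p.1)
      (μ.prod (volume.restrict (Ioc a b))) := by
  have hcont : Continuous fun p : E × ℝ => fderiv ℝ f (p.2 • p.1) p.1 :=
    ((hf.continuous_fderiv one_ne_zero).comp (continuous_snd.smul continuous_fst)).clm_apply
      continuous_fst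
  have hnorm : ∀ c, 0 < c → ∫ x, ‖fderiv ℝ f (c • x) x‖ ∂μ
      = (c ^ (finrank ℝ E + 1))⁻¹ * ∫ x, ‖radialDeriv f x‖ ∂μ := fun c hc => by
    simp_rw [fderiv_smul_apply_self hc.ne', norm_mul, norm_inv, Real.norm_of_nonneg hc.le]
    rw [integral_const_mul, Measure.integral_comp_smul_of_nonneg μ (fun y => ‖radialDeriv f y‖) c
      (hR := hc.le), smul_eq_mul, pow_succ, mul_inv_rev, mul_assoc]
  refine (integrable_prod_iff' hcont.aestronglyMeasurable).2 ⟨?_, ?_⟩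
  · refine (ae_restrict_iff' measurableSet_Ioc).2 (.of_forall fun c hc => ?_)
    simp_rw [fderiv_smul_apply_self (ha.trans hc.1).ne']
    exact ((integrable_comp_smul_iff μ _ (ha.trans hc.1).ne').2 hψ).const_mul _
  · have hbound : ContinuousOn
        (fun c : ℝ => (c ^ (finrank ℝ E + 1))⁻¹ * ∫ x, ‖radialDeriv f x‖ ∂μ) (Icc a b) :=
      ((continuous_pow _).continuousOn.inv₀ fun c hc => pow_ne_zero _ (ha.trans_le hc.1).ne').mul
        continuousOn_const
    exact ((hbound.integrableOn_Icc).mono_set Ioc_subset_Icc_self).congr_fun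
      (fun c hc => (hnorm c (ha.trans hc.1)).symm) measurableSet_Ioc

theorem upperTail_scaled_sub_eq_integral (hf : ContDiff ℝ 1 f) (hfi : Integrable f μ)
    (hψ : Integrable (radialDeriv f) μ) (t : ℝ) {a b : ℝ} (ha : 0 < a) (hab : a ≤ b) :
    (b ^ finrank ℝ E)⁻¹ * upperTail μ L f (b * t) - (a ^ finrank ℝ E)⁻¹ * upperTail μ L f (a * t)
      = ∫ c in a..b, (c ^ (finrank ℝ E + 1))⁻¹ * upperTail μ L (radialDeriv f) (c * t) := by
  have hb := ha.trans_le hab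
  have hFTC : ∀ x : E, f (b • x) - f (a • x) = ∫ c in Ioc a b, fderiv ℝ f (c • x) x := fun x => by
    have hcont : Continuous fun c : ℝ => fderiv ℝ f (c • x) x :=
      ((hf.continuous_fderiv one_ne_zero).comp (continuous_id.smul continuous_const)).clm_apply
        continuous_const
    rw [← intervalIntegral.integral_of_le hab, intervalIntegral.integral_eq_sub_of_hasDerivAt
      (fun c _ => hasDerivAt_comp_smul (hf.differentiable one_ne_zero) x c)
      (hcont.intervalIntegrable a b)]
  have hint : ∀ c : ℝ, 0 < c → IntegrableOn (fun x => f (c • x)) {x | t < L x} μ := fun c hc =>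
    ((integrable_comp_smul_iff μ f hc.ne').2 hfi).integrableOn
  have hswap : Integrable (fun p : E × ℝ => fderiv ℝ f (p.2 • p.1) p.1)
      ((μ.restrict {x | t < L x}).prod (volume.restrict (Ioc a b))) :=
    (integrable_fderiv_comp_smul_prod hf hψ ha).mono_measure
      (Measure.prod_mono Measure.restrict_le_self le_rfl)
  calc _ = ∫ x in {x | t < L x}, f (b • x) ∂μ - ∫ x in {x | t < L x}, f (a • x) ∂μ := by
        rw [setIntegral_lt_comp_smul hb, setIntegral_lt_comp_smul ha]
    _ = ∫ x in {x | t < L x}, (∫ c in Ioc a b, fderiv ℝ f (c • x) x) ∂μ := by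
        rw [← integral_sub (hint b hb) (hint a ha)]
        simp_rw [hFTC]
    _ = ∫ c in Ioc a b, (∫ x in {x | t < L x}, fderiv ℝ f (c • x) x ∂μ) :=
        integral_integral_swap hswap
    _ = ∫ c in Ioc a b, (c ^ (finrank ℝ E + 1))⁻¹ * upperTail μ L (radialDeriv f) (c * t) :=
        setIntegral_congr_fun measurableSet_Ioc fun c hc =>
          setIntegral_fderiv_comp_smul (ha.trans hc.1) t
    _ = _ := (intervalIntegral.integral_of_le hab).symm

theorem hasDerivAt_upperTail_scaled (hL : Function.Surjective L) (hf : ContDiff ℝ 1 f)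
    (hfi : Integrable f μ) (hψ : Integrable (radialDeriv f) μ) (t : ℝ) {w : ℝ} (hw : 0 < w) :
    HasDerivAt (fun c => (c ^ finrank ℝ E)⁻¹ * upperTail μ L f (c * t))
      ((w ^ (finrank ℝ E + 1))⁻¹ * upperTail μ L (radialDeriv f) (w * t)) w := by
  set Φ := fun c : ℝ => (c ^ finrank ℝ E)⁻¹ * upperTail μ L f (c * t)
  set k := fun c : ℝ => (c ^ (finrank ℝ E + 1))⁻¹ * upperTail μ L (radialDeriv f) (c * t)
  have hk : ContinuousOn k (Ioi 0) :=
    ((continuous_pow _).continuousOn.inv₀ fun c hc => pow_ne_zero _ (ne_of_gt hc)).mul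
      ((continuous_upperTail hL hψ).comp (continuous_mul_const t)).continuousOn
  have hΦ : Φ =ᶠ[𝓝 w] fun c => Φ w + ∫ s in w..c, k s := by
    filter_upwards [Ioi_mem_nhds hw] with c hc
    rcases le_total w c with hwc | hcw
    · linarith [upperTail_scaled_sub_eq_integral (L := L) hf hfi hψ t hw hwc]
    · linarith [upperTail_scaled_sub_eq_integral (L := L) hf hfi hψ t hc hcw,
        intervalIntegral.integral_symm (μ := volume) (f := k) w c]
  have hFTC : HasDerivAt (fun c => ∫ s in w..c, k s) (k w) w :=
    intervalIntegral.integral_hasDerivAt_right IntervalIntegrable.refl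
      (hk.stronglyMeasurableAtFilter isOpen_Ioi w hw) (hk.continuousAt (Ioi_mem_nhds hw))
  exact (hFTC.const_add (Φ w)).congr_of_eventuallyEq hΦ

theorem hasDerivAt_upperTail (hL : Function.Surjective L) (hf : ContDiff ℝ 1 f)
    (hfi : Integrable f μ) (hψ : Integrable (radialDeriv f) μ) {u : ℝ} (hu : u ≠ 0) :
    HasDerivAt (upperTail μ L f)
      ((finrank ℝ E * upperTail μ L f u + upperTail μ L (radialDeriv f) u) / u) u := by
  have hscaled : HasDerivAt (fun c => upperTail μ L f (c * u))
      (finrank ℝ E * upperTail μ L f u + upperTail μ L (radialDeriv f) u) 1 := by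
    have hΦ := hasDerivAt_upperTail_scaled hL hf hfi hψ u one_pos
    refine (((hasDerivAt_pow (finrank ℝ E) 1).mul hΦ).congr_of_eventuallyEq ?_).congr_deriv
      (by simp)
    filter_upwards [Ioi_mem_nhds one_pos] with c (hc : 0 < c)
    simp [mul_inv_cancel_left₀ (pow_ne_zero _ hc.ne')]
  -- Substituting `c = v / u` covers both signs of `u` at once.
  rw [← div_self hu] at hscaled
  have hcomp := hscaled.comp (h := fun v => v / u) u ((hasDerivAt_id u).div_const u)
  rw [mul_one_div] at hcomp
  exact hcomp.congr_of_eventuallyEq (.of_forall fun v => by simp [div_mul_cancel₀ v hu])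

theorem setIntegral_le_eq_integral_Iic (hL : Function.Surjective L) (hf0 : 0 ≤ f)
    (hf : ContDiff ℝ 1 f) (hfi : Integrable f μ) (hψ : Integrable (radialDeriv f) μ)
    {g : ℝ → ℝ} (hg : ∀ t ≠ 0, g t =
      -((finrank ℝ E * upperTail μ L f t + upperTail μ L (radialDeriv f) t) / t)) (s : ℝ) :
    ∫ x in {x | L x ≤ s}, f x ∂μ = ∫ t in Iic s, g t := by
  have hF : (fun s => ∫ x in {x | L x ≤ s}, f x ∂μ) = fun s => ∫ x, f x ∂μ - upperTail μ L f s :=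
    funext (setIntegral_le_eq_sub_upperTail hfi)
  refine (integral_Iic_eq_of_monotone_of_hasDerivAt_ne (a := 0)
    (monotone_setIntegral_le hf0 hfi) ?_ ?_ (fun t ht => ?_) s).symm
  · rw [hF]
    exact continuous_const.sub (continuous_upperTail hL hfi)
  · rw [hF]
    simpa using (tendsto_upperTail_atBot hfi).const_sub (∫ x, f x ∂μ)
  · rw [hF, hg t ht]
    exact (hasDerivAt_upperTail hL hf hfi hψ ht).const_sub _

end UpperTail

theorem sum_density_sensitivity_indicator_gt_general
    (n : ℕ) (hn : 1 ≤ n)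
    (f : EuclideanSpace ℝ (Fin n) → ℝ)
    (hf_nonneg : ∀ x, 0 ≤ f x)
    (hf_diff : ContDiff ℝ 1 f)
    (hf_prob : ∫ x, f x = 1)
    (hf_int : Integrable (fun x : EuclideanSpace ℝ (Fin n) => (inner ℝ x (gradient f x) : ℝ)))
    (μ : Measure (EuclideanSpace ℝ (Fin n)))
    (hμ : μ = volume.withDensity (fun x => ENNReal.ofReal (f x)))
    (g : ℝ → ℝ)
    (hg : ∀ s : ℝ, s ≠ 0 → g s =
      -((1 / s) * ∫ x : EuclideanSpace ℝ (Fin n),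
        Set.indicator {y : EuclideanSpace ℝ (Fin n) | s < ∑ i, y i}
          (fun y => (inner ℝ y (gradient f y) : ℝ) + n * f y) x)) :
    ∀ s : ℝ, μ {x | ∑ i, x i ≤ s} = ENNReal.ofReal (∫ t in Set.Iic s, g t) := by
  intro s
  set L : EuclideanSpace ℝ (Fin n) →L[ℝ] ℝ := ∑ i, EuclideanSpace.proj i
  have hL_apply : ∀ x, L x = ∑ i, x i := fun x => by simp [L]
  have hL : Function.Surjective L := fun c =>
    ⟨EuclideanSpace.single ⟨0, hn⟩ c, by simp [hL_apply]⟩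
  have hfi : Integrable f := Integrable.of_integral_ne_zero (by simp [hf_prob])
  have hψ : Integrable (radialDeriv f) := hf_int.congr (.of_forall (inner_self_gradient f))
  have hg' : ∀ t ≠ 0, g t = -((finrank ℝ (EuclideanSpace ℝ (Fin n)) * upperTail volume L f t
      + upperTail volume L (radialDeriv f) t) / t) := fun t ht => by
    simp_rw [hg t ht, ← hL_apply, integral_indicator (measurableSet_lt_apply t),
      inner_self_gradient, integral_add hψ.integrableOn (hfi.integrableOn.const_mul _),
      integral_const_mul, finrank_euclideanSpace_fin]
    unfold upperTail
    ring
  simp_rw [hμ, ← hL_apply]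
  rw [withDensity_apply _ (measurableSet_le L.measurable measurable_const),
    ← ofReal_integral_eq_lintegral_ofReal hfi.integrableOn (.of_forall hf_nonneg),
    setIntegral_le_eq_integral_Iic hL hf_nonneg hf_diff hfi hψ hg' s]

/-- Let `f` be a continuously differentiable probability density on `ℝⁿ`
(`n ≥ 1`) with `∫ |⟨x, ∇f(x)⟩| dx < ∞`, and let `μ` be the law of `X ∼ f`.  Define
`g̃(s) = -(1/s) ∫ 1{x₁+⋯+xₙ > s} (⟨x, ∇f(x)⟩ + n f(x)) dx` for `s ≠ 0` and `g̃(0) = 0`.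
Then `g̃` is a probability density of `S = X₁ + ⋯ + Xₙ`. -/
theorem sum_density_sensitivity_indicator_gt
    (n : ℕ) (hn : 1 ≤ n)
    (f : EuclideanSpace ℝ (Fin n) → ℝ)
    (hf_nonneg : ∀ x, 0 ≤ f x)
    (hf_diff : ContDiff ℝ 1 f)
    (hf_prob : ∫ x, f x = 1)
    (hf_int : Integrable (fun x : EuclideanSpace ℝ (Fin n) => (inner ℝ x (gradient f x) : ℝ)))
    (μ : Measure (EuclideanSpace ℝ (Fin n)))
    (hμ : μ = volume.withDensity (fun x => ENNReal.ofReal (f x)))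
    (g : ℝ → ℝ)
    (hg : ∀ s : ℝ, s ≠ 0 → g s =
      -((1 / s) * ∫ x : EuclideanSpace ℝ (Fin n),
        Set.indicator {y : EuclideanSpace ℝ (Fin n) | s < ∑ i, y i}
          (fun y => (inner ℝ y (gradient f y) : ℝ) + n * f y) x))
    (hg0 : g 0 = 0) :
    ∀ s : ℝ, μ {x | ∑ i, x i ≤ s} = ENNReal.ofReal (∫ t in Set.Iic s, g t) :=
  sum_density_sensitivity_indicator_gt_general n hn f hf_nonneg hf_diff hf_prob hf_int μ hμ g hg
end

section
/- Fix i ∈ {1,…,n}. Define gᵢ : ℝ → ℝ by gᵢ(s) = (1/s) ∫_{ℝⁿ} 1{xᵢ ≤ s} (xᵢ · ∂f/∂xᵢ(x) + f(x)) dx for s ≠ 0, and gᵢ(0) = 0. Then gᵢ is a probability density of the i-th marginal: for every s ∈ ℝ, μ({x ∈ ℝⁿ : xᵢ ≤ s}) = ∫_{−∞}^{s} gᵢ(t) dt. -/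
/-!
Write `x = (t, y)` with `t = xᵢ`. For almost every `y` the slice `φ(t) = f(t, y)` and
`t φ'(t)` are integrable, so `t φ(t)` has a limit at `-∞`, which must vanish since `φ` is
integrable; the fundamental theorem of calculus then gives
`∫_{-∞}^s (t φ'(t) + φ(t)) dt = s φ(s)`. Integrating over `y` (Fubini), the numerator of `gᵢ(s)`
equals `s pᵢ(s)`, where `pᵢ` is the `i`-th marginal density. Hence `gᵢ = pᵢ` off `s = 0`, and
`μ{xᵢ ≤ s} = ∫_{-∞}^s pᵢ` is Fubini again.
-/

open MeasureTheory Set Filter Topology Asymptotics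

theorem not_integrableAtFilter_inv_atBot :
    ¬ IntegrableAtFilter (fun t : ℝ => t⁻¹) atBot := by
  intro h
  have hneg : MeasurableEmbedding (Neg.neg : ℝ → ℝ) :=
    (MeasurableEquiv.neg ℝ).measurableEmbedding
  rw [← Filter.map_neg_atTop, ← Measure.map_neg_eq_self (volume : Measure ℝ),
    hneg.integrableAtFilter_map_iff] at h
  obtain ⟨a, ha⟩ := integrableAtFilter_atTop_iff.1 h.neg
  exact not_integrableOn_Ici_inv (a := a) (by simpa [Function.comp_def, inv_neg] using ha)

/-- Otherwise `|φ t| ≥ c / |t|` near `-∞`, and `t⁻¹` is not integrable there. -/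
theorem eq_zero_of_tendsto_mul_atBot {φ : ℝ → ℝ} {a L : ℝ} (hφ : IntegrableOn φ (Iic a))
    (h : Tendsto (fun t => t * φ t) atBot (𝓝 L)) : L = 0 := by
  by_contra hL
  have hbig : (fun t : ℝ => t⁻¹) =O[atBot] φ := by
    refine IsBigO.of_bound (2 / |L|) ?_
    filter_upwards [(tendsto_order.1 h.abs).1 _ (half_lt_self (abs_pos.2 hL))] with t ht
    rw [abs_mul] at ht
    have ht0 : 0 < |t| := pos_of_mul_pos_left ((half_pos (abs_pos.2 hL)).trans ht) (abs_nonneg _)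
    rw [Real.norm_eq_abs, Real.norm_eq_abs, abs_inv, inv_le_iff_one_le_mul₀ ht0,
      div_mul_eq_mul_div, div_mul_eq_mul_div, le_div_iff₀ (abs_pos.2 hL)]
    linarith
  exact not_integrableAtFilter_inv_atBot <| hbig.integrableAtFilter
    (measurable_inv.stronglyMeasurable.stronglyMeasurableAtFilter) ⟨Iic a, Iic_mem_atBot a, hφ⟩

theorem integral_Iic_mul_deriv_add {φ φ' : ℝ → ℝ} {s : ℝ}
    (hderiv : ∀ t ∈ Iic s, HasDerivAt φ (φ' t) t) (hφ : IntegrableOn φ (Iic s))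
    (hφ' : IntegrableOn (fun t => t * φ' t) (Iic s)) :
    ∫ t in Iic s, (t * φ' t + φ t) = s * φ s := by
  have hderiv' : ∀ t ∈ Iic s, HasDerivAt (fun t => t * φ t) (t * φ' t + φ t) t := fun t ht =>
    ((hasDerivAt_id t).mul (hderiv t ht)).congr_deriv (by simp [add_comm])
  have hint := hφ'.add hφ
  have hlim := tendsto_limUnder_of_hasDerivAt_of_integrableOn_Iic hderiv' hint
  rw [integral_Iic_of_hasDerivAt_of_tendsto' hderiv' hint hlim,
    eq_zero_of_tendsto_mul_atBot hφ hlim, sub_zero]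

/-- `coordSplit i (t, y)` has `i`-th coordinate `t`, and its other coordinates are `y` in order. -/
def coordSplit {m : ℕ} (i : Fin (m + 1)) : ℝ × (Fin m → ℝ) ≃ᵐ EuclideanSpace ℝ (Fin (m + 1)) :=
  (MeasurableEquiv.piFinSuccAbove (fun _ => ℝ) i).symm.trans
    (MeasurableEquiv.toLp 2 (Fin (m + 1) → ℝ))

section CoordSplit

variable {m : ℕ} (i : Fin (m + 1))

theorem measurePreserving_coordSplit : MeasurePreserving (coordSplit i) :=
  (EuclideanSpace.volume_preserving_symm_measurableEquiv_toLp (Fin (m + 1))).symm.comp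
    (volume_preserving_piFinSuccAbove (fun _ => ℝ) i).symm

@[simp]
theorem coordSplit_apply_self (t : ℝ) (y : Fin m → ℝ) : coordSplit i (t, y) i = t := by
  simp [coordSplit, MeasurableEquiv.piFinSuccAbove_symm_apply]

theorem coordSplit_eq_add_smul_single (t : ℝ) (y : Fin m → ℝ) :
    coordSplit i (t, y) = coordSplit i (0, y) + t • EuclideanSpace.single i 1 := by
  ext j
  rcases eq_or_ne j i with rfl | hj
  · simp
  · obtain ⟨k, rfl⟩ := Fin.exists_succAbove_eq hj
    simp [coordSplit, MeasurableEquiv.piFinSuccAbove_symm_apply, hj]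

theorem hasDerivAt_comp_coordSplit {F : Type*} [NormedAddCommGroup F] [NormedSpace ℝ F]
    {f : EuclideanSpace ℝ (Fin (m + 1)) → F} {t : ℝ} {y : Fin m → ℝ}
    (hf : DifferentiableAt ℝ f (coordSplit i (t, y))) :
    HasDerivAt (fun t => f (coordSplit i (t, y)))
      (fderiv ℝ f (coordSplit i (t, y)) (EuclideanSpace.single i 1)) t := by
  have hline : (fun t => coordSplit i (t, y)) =
      fun t => coordSplit i (0, y) + t • EuclideanSpace.single i 1 :=
    funext fun t => coordSplit_eq_add_smul_single i t y
  have hγ : HasDerivAt (fun t => coordSplit i (t, y)) (EuclideanSpace.single i 1) t := by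
    rw [hline]
    simpa using ((hasDerivAt_id t).smul_const (EuclideanSpace.single i (1 : ℝ))).const_add
      (coordSplit i (0, y))
  exact hf.hasFDerivAt.comp_hasDerivAt t hγ

theorem measurePreserving_coordSplit_restrict (s : ℝ) :
    MeasurePreserving (coordSplit i) ((volume.restrict (Iic s)).prod volume)
      (volume.restrict {x | x i ≤ s}) := by
  have hpre : coordSplit i ⁻¹' {x | x i ≤ s} = Iic s ×ˢ univ := by
    ext ⟨t, y⟩; simp
  have := (measurePreserving_coordSplit i).restrict_preimage_emb
    (coordSplit i).measurableEmbedding {x | x i ≤ s}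
  rwa [hpre, Measure.volume_eq_prod, ← Measure.prod_restrict, Measure.restrict_univ] at this

section
variable {F : EuclideanSpace ℝ (Fin (m + 1)) → ℝ} {s : ℝ}

theorem integrable_comp_coordSplit_restrict (hF : IntegrableOn F {x | x i ≤ s}) :
    Integrable (fun p => F (coordSplit i p)) ((volume.restrict (Iic s)).prod volume) :=
  ((measurePreserving_coordSplit_restrict i s).integrable_comp_emb
    (coordSplit i).measurableEmbedding).2 hF

theorem setIntegral_coord_le_eq_integral_setIntegral (hF : IntegrableOn F {x | x i ≤ s}) :
    ∫ x in {x | x i ≤ s}, F x = ∫ y, ∫ t in Iic s, F (coordSplit i (t, y)) := by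
  rw [← (measurePreserving_coordSplit_restrict i s).integral_comp',
    integral_prod_symm _ (integrable_comp_coordSplit_restrict i hF)]

theorem setIntegral_coord_le_eq_setIntegral_integral (hF : IntegrableOn F {x | x i ≤ s}) :
    ∫ x in {x | x i ≤ s}, F x = ∫ t in Iic s, ∫ y, F (coordSplit i (t, y)) := by
  rw [← (measurePreserving_coordSplit_restrict i s).integral_comp',
    integral_prod _ (integrable_comp_coordSplit_restrict i hF)]

theorem ae_integrableOn_Iic_comp_coordSplit (hF : IntegrableOn F {x | x i ≤ s}) :
    ∀ᵐ y, IntegrableOn (fun t => F (coordSplit i (t, y))) (Iic s) :=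
  (integrable_comp_coordSplit_restrict i hF).prod_left_ae

end

theorem measurableSet_setOf_coord_le (s : ℝ) :
    MeasurableSet {x : EuclideanSpace ℝ (Fin (m + 1)) | x i ≤ s} :=
  measurableSet_le (by fun_prop) measurable_const

noncomputable def coordMarginal (f : EuclideanSpace ℝ (Fin (m + 1)) → ℝ) (t : ℝ) : ℝ :=
  ∫ y, f (coordSplit i (t, y))

variable {f : EuclideanSpace ℝ (Fin (m + 1)) → ℝ}

theorem withDensity_setOf_coord_le (hf_nonneg : ∀ x, 0 ≤ f x) (hf : Integrable f) (s : ℝ) :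
    volume.withDensity (fun x => ENNReal.ofReal (f x)) {x | x i ≤ s} =
      ENNReal.ofReal (∫ t in Iic s, coordMarginal i f t) := by
  rw [withDensity_apply _ (measurableSet_setOf_coord_le i s),
    ← ofReal_integral_eq_lintegral_ofReal hf.integrableOn (ae_of_all _ hf_nonneg),
    setIntegral_coord_le_eq_setIntegral_integral i hf.integrableOn]
  rfl

theorem integral_indicator_coord_le_mul_deriv_add (hf_diff : Differentiable ℝ f)
    (hf : Integrable f)
    (hf_int : Integrable fun x => x i * fderiv ℝ f x (EuclideanSpace.single i 1)) (s : ℝ) :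
    ∫ x, {x | x i ≤ s}.indicator
        (fun x => x i * fderiv ℝ f x (EuclideanSpace.single i 1) + f x) x =
      s * coordMarginal i f s := by
  rw [integral_indicator (measurableSet_setOf_coord_le i s),
    setIntegral_coord_le_eq_integral_setIntegral i
      (F := fun x => x i * fderiv ℝ f x (EuclideanSpace.single i 1) + f x)
      (hf_int.add hf).integrableOn,
    coordMarginal, ← integral_const_mul]
  refine integral_congr_ae ?_
  filter_upwards [ae_integrableOn_Iic_comp_coordSplit i hf.integrableOn,
    ae_integrableOn_Iic_comp_coordSplit i hf_int.integrableOn] with y hy hy'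
  simp only [coordSplit_apply_self] at hy' ⊢
  exact integral_Iic_mul_deriv_add (fun t _ => hasDerivAt_comp_coordSplit i (hf_diff _)) hy hy'

end CoordSplit

theorem marginal_density_sensitivity_indicator_le_general
    (n : ℕ) (i : Fin n)
    (f : EuclideanSpace ℝ (Fin n) → ℝ)
    (hf_nonneg : ∀ x, 0 ≤ f x)
    (hf_diff : ContDiff ℝ 1 f)
    (hf_prob : ∫ x, f x = 1)
    (hf_int : Integrable (fun x : EuclideanSpace ℝ (Fin n) =>
      x i * fderiv ℝ f x (EuclideanSpace.single i 1)))
    (μ : Measure (EuclideanSpace ℝ (Fin n)))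
    (hμ : μ = volume.withDensity (fun x => ENNReal.ofReal (f x)))
    (g : ℝ → ℝ)
    (hg : ∀ s : ℝ, s ≠ 0 → g s =
      (1 / s) * ∫ x : EuclideanSpace ℝ (Fin n),
        Set.indicator {y : EuclideanSpace ℝ (Fin n) | y i ≤ s}
          (fun y => y i * fderiv ℝ f y (EuclideanSpace.single i 1) + f y) x) :
    ∀ s : ℝ, μ {x | x i ≤ s} = ENNReal.ofReal (∫ t in Set.Iic s, g t) := by
  cases n with
  | zero => exact i.elim0
  | succ m =>
  have hf : Integrable f := Integrable.of_integral_ne_zero (by simp [hf_prob])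
  have hg_ae : g =ᵐ[volume] coordMarginal i f := by
    filter_upwards [compl_mem_ae_iff.2 (measure_singleton (0 : ℝ))] with s hs
    rw [hg s hs, integral_indicator_coord_le_mul_deriv_add i
      (hf_diff.differentiable one_ne_zero) hf hf_int, one_div, inv_mul_cancel_left₀ hs]
  intro s
  rw [hμ, withDensity_setOf_coord_le i hf_nonneg hf, integral_congr_ae (ae_restrict_of_ae hg_ae)]

/-- Let `f` be a continuously differentiable probability density on `ℝⁿ`
(`n ≥ 1`) with `∫ |xᵢ ∂f/∂xᵢ(x)| dx < ∞` for a fixed `i`, and let `μ` be the law of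
`X ∼ f`.  Define `gᵢ(s) = (1/s) ∫ 1{xᵢ ≤ s} (xᵢ ∂f/∂xᵢ(x) + f(x)) dx` for `s ≠ 0` and
`gᵢ(0) = 0`.  Then `gᵢ` is a probability density of the `i`-th marginal. -/
theorem marginal_density_sensitivity_indicator_le
    (n : ℕ) (hn : 1 ≤ n) (i : Fin n)
    (f : EuclideanSpace ℝ (Fin n) → ℝ)
    (hf_nonneg : ∀ x, 0 ≤ f x)
    (hf_diff : ContDiff ℝ 1 f)
    (hf_prob : ∫ x, f x = 1)
    (hf_int : Integrable (fun x : EuclideanSpace ℝ (Fin n) =>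
      x i * fderiv ℝ f x (EuclideanSpace.single i 1)))
    (μ : Measure (EuclideanSpace ℝ (Fin n)))
    (hμ : μ = volume.withDensity (fun x => ENNReal.ofReal (f x)))
    (g : ℝ → ℝ)
    (hg : ∀ s : ℝ, s ≠ 0 → g s =
      (1 / s) * ∫ x : EuclideanSpace ℝ (Fin n),
        Set.indicator {y : EuclideanSpace ℝ (Fin n) | y i ≤ s}
          (fun y => y i * fderiv ℝ f y (EuclideanSpace.single i 1) + f y) x)
    (hg0 : g 0 = 0) :
    ∀ s : ℝ, μ {x | x i ≤ s} = ENNReal.ofReal (∫ t in Set.Iic s, g t) :=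
  marginal_density_sensitivity_indicator_le_general n i f hf_nonneg hf_diff hf_prob hf_int μ hμ g hg
end

section
/- Fix i ∈ {1,…,n}. Define g̃ᵢ : ℝ → ℝ by g̃ᵢ(s) = −(1/s) ∫_{ℝⁿ} 1{xᵢ > s} (xᵢ · ∂f/∂xᵢ(x) + f(x)) dx for s ≠ 0, and g̃ᵢ(0) = 0. Then g̃ᵢ is a probability density of the i-th marginal: for every s ∈ ℝ, μ({x ∈ ℝⁿ : xᵢ ≤ s}) = ∫_{−∞}^{s} g̃ᵢ(t) dt. -/
/-!
Split `x = (u, y)` with `u = xᵢ`. The integrand `xᵢ ∂ᵢf + f` is `∂ᵤ (u f(u, y))`; for a.e. `y` the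
function `u f(u, y)` has a limit at `+∞` because its derivative is integrable, and that limit is `0`
because `f(·, y)` is integrable. Hence `∫_{xᵢ > s} (xᵢ ∂ᵢf + f) = -s fᵢ(s)`, where `fᵢ` is the
marginal density of `xᵢ`, so `g̃ᵢ = fᵢ` away from `s = 0`.
-/

open MeasureTheory Set Filter Topology

theorem eq_zero_of_tendsto_mul_of_integrableOn_Ioi {φ : ℝ → ℝ} {a L : ℝ}
    (hφ : IntegrableOn φ (Ioi a)) (hL : Tendsto (fun x => x * φ x) atTop (𝓝 L)) :
    L = 0 := by
  by_contra hL0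
  obtain ⟨b, hb⟩ := ((eventually_gt_atTop 0).and (hL.abs.eventually
    (eventually_gt_nhds (half_lt_self (abs_pos.2 hL0))))).exists_forall_of_atTop
  apply not_integrableOn_Ioi_inv (a := max a b)
  refine ((hφ.mono_set (Ioi_subset_Ioi (le_max_left a b))).norm.const_mul (2 / |L|)).mono'
    (by fun_prop) ?_
  filter_upwards [ae_restrict_mem measurableSet_Ioi] with x hx
  obtain ⟨hx0, hxL⟩ := hb x ((le_max_right a b).trans hx.le)
  rw [abs_mul, abs_of_pos hx0] at hxL
  rw [norm_inv, Real.norm_of_nonneg hx0.le, Real.norm_eq_abs, inv_le_iff_one_le_mul₀ hx0]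
  rw [div_mul_eq_mul_div, div_mul_eq_mul_div, one_le_div (abs_pos.2 hL0)]
  linarith

theorem integral_Ioi_mul_deriv_add {φ φ' : ℝ → ℝ} {t : ℝ}
    (hφ' : ∀ x, HasDerivAt φ (φ' x) x) (hφ : IntegrableOn φ (Ioi t))
    (hint : IntegrableOn (fun x => x * φ' x + φ x) (Ioi t)) :
    ∫ x in Ioi t, (x * φ' x + φ x) = -(t * φ t) := by
  have hderiv : ∀ x, HasDerivAt (fun x => x * φ x) (x * φ' x + φ x) x := fun x =>
    ((hasDerivAt_id' x).mul (hφ' x)).congr_deriv (by ring)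
  have hlim := tendsto_limUnder_of_hasDerivAt_of_integrableOn_Ioi (fun x _ => hderiv x) hint
  rw [integral_Ioi_of_hasDerivAt_of_tendsto' (fun x _ => hderiv x) hint hlim,
    eq_zero_of_tendsto_mul_of_integrableOn_Ioi hφ hlim, zero_sub]

namespace EuclideanSpace

variable {m : ℕ} (i : Fin (m + 1))

noncomputable def insertNthMeasurableEquiv : ℝ × (Fin m → ℝ) ≃ᵐ EuclideanSpace ℝ (Fin (m + 1)) :=
  (MeasurableEquiv.piFinSuccAbove (fun _ => ℝ) i).symm.trans (MeasurableEquiv.toLp 2 _)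

theorem insertNthMeasurableEquiv_apply (p : ℝ × (Fin m → ℝ)) :
    insertNthMeasurableEquiv i p = WithLp.toLp 2 (Fin.insertNth i p.1 p.2) := rfl

@[simp]
theorem insertNthMeasurableEquiv_apply_self (p : ℝ × (Fin m → ℝ)) :
    insertNthMeasurableEquiv i p i = p.1 := by
  simp [insertNthMeasurableEquiv_apply]

theorem measurePreserving_insertNthMeasurableEquiv :
    MeasurePreserving (insertNthMeasurableEquiv i) :=
  (PiLp.volume_preserving_toLp _).comp ((volume_preserving_piFinSuccAbove (fun _ => ℝ) i).symm _)

theorem hasDerivAt_insertNthMeasurableEquiv (y : Fin m → ℝ) (u : ℝ) :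
    HasDerivAt (fun v => insertNthMeasurableEquiv i (v, y)) (single i 1) u := by
  have hline : (fun v => insertNthMeasurableEquiv i (v, y)) =
      fun v => insertNthMeasurableEquiv i (0, y) + v • single i 1 := by
    ext v j
    rcases eq_or_ne j i with rfl | hj
    · simp
    · obtain ⟨k, rfl⟩ := Fin.exists_succAbove_eq hj
      simp [insertNthMeasurableEquiv_apply, hj]
  rw [hline]
  simpa using ((hasDerivAt_id u).smul_const (single i (1 : ℝ))).const_add
    (insertNthMeasurableEquiv i (0, y))

theorem setIntegral_coord_mem (h : EuclideanSpace ℝ (Fin (m + 1)) → ℝ) (S : Set ℝ) :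
    ∫ x in {x | x i ∈ S}, h x = ∫ p in S ×ˢ univ, h (insertNthMeasurableEquiv i p) := by
  rw [← (measurePreserving_insertNthMeasurableEquiv i).setIntegral_preimage_emb
    (insertNthMeasurableEquiv i).measurableEmbedding]
  congr 2
  ext p
  simp

noncomputable def coordMarginal (f : EuclideanSpace ℝ (Fin (m + 1)) → ℝ) (t : ℝ) : ℝ :=
  ∫ y, f (insertNthMeasurableEquiv i (t, y))

theorem integrable_comp_insertNthMeasurableEquiv {h : EuclideanSpace ℝ (Fin (m + 1)) → ℝ}
    (hh : Integrable h) :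
    Integrable (fun p => h (insertNthMeasurableEquiv i p)) (volume.prod volume) :=
  ((measurePreserving_insertNthMeasurableEquiv i).integrable_comp_emb
    (insertNthMeasurableEquiv i).measurableEmbedding).2 hh

theorem setIntegral_coord_mem_eq_integral_coordMarginal {f : EuclideanSpace ℝ (Fin (m + 1)) → ℝ}
    (hf : Integrable f) (S : Set ℝ) :
    ∫ x in {x | x i ∈ S}, f x = ∫ t in S, coordMarginal i f t := by
  rw [setIntegral_coord_mem, Measure.volume_eq_prod,
    setIntegral_prod _ (integrable_comp_insertNthMeasurableEquiv i hf).integrableOn]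
  simp only [Measure.restrict_univ, coordMarginal]

theorem setIntegral_coord_mem_eq_integral_integral {h : EuclideanSpace ℝ (Fin (m + 1)) → ℝ}
    (hh : Integrable h) (S : Set ℝ) :
    ∫ x in {x | x i ∈ S}, h x = ∫ y, ∫ u in S, h (insertNthMeasurableEquiv i (u, y)) := by
  have hint := (integrable_comp_insertNthMeasurableEquiv i hh).integrableOn (s := S ×ˢ univ)
  rw [IntegrableOn, ← Measure.prod_restrict, Measure.restrict_univ] at hint
  rw [setIntegral_coord_mem, Measure.volume_eq_prod, ← Measure.prod_restrict,
    Measure.restrict_univ, integral_prod_symm _ hint]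

theorem setIntegral_coord_gt_mul_pderiv_add {f : EuclideanSpace ℝ (Fin (m + 1)) → ℝ}
    (hf : Integrable f) (hdf : Differentiable ℝ f)
    (hint : Integrable fun x => x i * fderiv ℝ f x (single i 1)) (t : ℝ) :
    ∫ x in {x | t < x i}, (x i * fderiv ℝ f x (single i 1) + f x) =
      -(t * coordMarginal i f t) := by
  have hh : Integrable fun x => x i * fderiv ℝ f x (single i 1) + f x := hint.add hf
  have hF := (integrable_comp_insertNthMeasurableEquiv i hf).prod_left_ae
  have hH := (integrable_comp_insertNthMeasurableEquiv i hh).prod_left_ae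
  change ∫ x in {x : EuclideanSpace ℝ (Fin (m + 1)) | x i ∈ Ioi t}, _ = _
  rw [setIntegral_coord_mem_eq_integral_integral i hh, coordMarginal,
    ← integral_const_mul, ← integral_neg]
  refine integral_congr_ae ?_
  filter_upwards [hF, hH] with y hFy hHy
  simp only [insertNthMeasurableEquiv_apply_self] at hHy ⊢
  exact integral_Ioi_mul_deriv_add
    (fun u => (hdf _).hasFDerivAt.comp_hasDerivAt u (hasDerivAt_insertNthMeasurableEquiv i y u))
    hFy.integrableOn hHy.integrableOn

end EuclideanSpace

theorem marginal_density_sensitivity_indicator_gt_general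
    (n : ℕ) (i : Fin n)
    (f : EuclideanSpace ℝ (Fin n) → ℝ)
    (hf_nonneg : ∀ x, 0 ≤ f x)
    (hf_diff : ContDiff ℝ 1 f)
    (hf_prob : ∫ x, f x = 1)
    (hf_int : Integrable (fun x : EuclideanSpace ℝ (Fin n) =>
      x i * fderiv ℝ f x (EuclideanSpace.single i 1)))
    (μ : Measure (EuclideanSpace ℝ (Fin n)))
    (hμ : μ = volume.withDensity (fun x => ENNReal.ofReal (f x)))
    (g : ℝ → ℝ)
    (hg : ∀ s : ℝ, s ≠ 0 → g s =
      -((1 / s) * ∫ x : EuclideanSpace ℝ (Fin n),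
        Set.indicator {y : EuclideanSpace ℝ (Fin n) | s < y i}
          (fun y => y i * fderiv ℝ f y (EuclideanSpace.single i 1) + f y) x)) :
    ∀ s : ℝ, μ {x | x i ≤ s} = ENNReal.ofReal (∫ t in Set.Iic s, g t) := by
  obtain ⟨m, rfl⟩ : ∃ m, n = m + 1 := Nat.exists_eq_succ_of_ne_zero i.pos.ne'
  have hf : Integrable f := .of_integral_ne_zero (by simp [hf_prob])
  have hcoord : Measurable fun x : EuclideanSpace ℝ (Fin (m + 1)) => x i := by fun_prop
  have hg_ae : g =ᵐ[volume] EuclideanSpace.coordMarginal i f := by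
    filter_upwards [Measure.ae_ne volume 0] with t ht
    rw [hg t ht, integral_indicator (measurableSet_lt measurable_const hcoord),
      EuclideanSpace.setIntegral_coord_gt_mul_pderiv_add i hf
        (hf_diff.differentiable one_ne_zero) hf_int]
    field_simp
  intro s
  rw [hμ, withDensity_apply _ (measurableSet_le hcoord measurable_const),
    ← ofReal_integral_eq_lintegral_ofReal hf.integrableOn (.of_forall hf_nonneg),
    setIntegral_congr_ae measurableSet_Iic (hg_ae.mono fun t ht _ => ht)]
  exact congrArg ENNReal.ofReal
    (EuclideanSpace.setIntegral_coord_mem_eq_integral_coordMarginal i hf (Iic s))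

/-- Let `f` be a continuously differentiable probability density on `ℝⁿ`
(`n ≥ 1`) with `∫ |xᵢ ∂f/∂xᵢ(x)| dx < ∞` for a fixed `i`, and let `μ` be the law of
`X ∼ f`.  Define `g̃ᵢ(s) = -(1/s) ∫ 1{xᵢ > s} (xᵢ ∂f/∂xᵢ(x) + f(x)) dx` for `s ≠ 0` and
`g̃ᵢ(0) = 0`.  Then `g̃ᵢ` is a probability density of the `i`-th marginal. -/
theorem marginal_density_sensitivity_indicator_gt
    (n : ℕ) (hn : 1 ≤ n) (i : Fin n)
    (f : EuclideanSpace ℝ (Fin n) → ℝ)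
    (hf_nonneg : ∀ x, 0 ≤ f x)
    (hf_diff : ContDiff ℝ 1 f)
    (hf_prob : ∫ x, f x = 1)
    (hf_int : Integrable (fun x : EuclideanSpace ℝ (Fin n) =>
      x i * fderiv ℝ f x (EuclideanSpace.single i 1)))
    (μ : Measure (EuclideanSpace ℝ (Fin n)))
    (hμ : μ = volume.withDensity (fun x => ENNReal.ofReal (f x)))
    (g : ℝ → ℝ)
    (hg : ∀ s : ℝ, s ≠ 0 → g s =
      -((1 / s) * ∫ x : EuclideanSpace ℝ (Fin n),
        Set.indicator {y : EuclideanSpace ℝ (Fin n) | s < y i}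
          (fun y => y i * fderiv ℝ f y (EuclideanSpace.single i 1) + f y) x))
    (hg0 : g 0 = 0) :
    ∀ s : ℝ, μ {x | x i ≤ s} = ENNReal.ofReal (∫ t in Set.Iic s, g t) :=
  marginal_density_sensitivity_indicator_gt_general n i f hf_nonneg hf_diff hf_prob hf_int μ hμ g hg
end

section
/- For all 0 < ε < s, ∫_{ε}^{s} (1/t) [ ∫_{ℝⁿ} 1{x₁ + ⋯ + xₙ ≤ t} (⟨x, ∇f(x)⟩ + n·f(x)) dx ] dt = μ({x ∈ ℝⁿ : x₁ + ⋯ + xₙ ≤ s}) − μ({x ∈ ℝⁿ : x₁ + ⋯ + xₙ ≤ ε}). (This is the integrated form of the density representation, obtained by the Fubini–Tonelli theorem.) -/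
/-!
Substituting `x = t • y` turns `t⁻¹ ∫_{t • S} div (f(x) x) dx` into
`∫_S t^(d-1) div (f(x) x)|_{x = t • y} dy = ∫_S ∂ₜ (t^d f (t • y)) dy`. Exchanging the `t`- and
`y`-integrals (the `y`-slices have `L¹` norm `t⁻¹ ‖div (f(x) x)‖₁ ≤ ε⁻¹ ‖div (f(x) x)‖₁`) and
integrating in `t` gives `∫_S (s^d f (s • y) - ε^d f (ε • y)) dy = ∫_{s • S} f - ∫_{ε • S} f`.
The half-spaces `{∑ xᵢ ≤ t}` are the dilates `t • {∑ xᵢ ≤ 1}`.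
-/

open MeasureTheory Set Module
open scoped Pointwise

section Scaling

variable {E : Type*} [NormedAddCommGroup E] [NormedSpace ℝ E]

/-- The divergence of the vector field `x ↦ f x • x`. -/
noncomputable def divRadialField (f : E → ℝ) (x : E) : ℝ :=
  fderiv ℝ f x x + finrank ℝ E * f x

lemma hasDerivAt_pow_finrank_mul_comp_smul_s6 {f : E → ℝ} {t : ℝ} {y : E} (ht : t ≠ 0)
    (hf : DifferentiableAt ℝ f (t • y)) :
    HasDerivAt (fun t : ℝ => t ^ finrank ℝ E * f (t • y))
      (t ^ finrank ℝ E * t⁻¹ * divRadialField f (t • y)) t := by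
  have hray : HasDerivAt (fun t : ℝ => t • y) y t := by
    simpa using (hasDerivAt_id t).smul_const y
  have hline : HasDerivAt (fun t : ℝ => f (t • y)) (fderiv ℝ f (t • y) y) t :=
    hf.hasFDerivAt.comp_hasDerivAt t hray
  refine ((hasDerivAt_pow (finrank ℝ E) t).mul hline).congr_deriv ?_
  have hpow : (finrank ℝ E : ℝ) * t ^ (finrank ℝ E - 1)
      = finrank ℝ E * t ^ finrank ℝ E * t⁻¹ := by
    rcases Nat.eq_zero_or_pos (finrank ℝ E) with h | h
    · simp [h]
    · rw [pow_sub₀ _ ht h, pow_one]; ring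
  simp only [divRadialField, map_smul, smul_eq_mul, hpow]
  field_simp
  ring

variable [FiniteDimensional ℝ E] [MeasurableSpace E] [BorelSpace E]

lemma measurable_divRadialField {f : E → ℝ} (hf : Measurable f) :
    Measurable (divRadialField f) :=
  (isBoundedBilinearMap_apply.continuous.measurable.comp
    ((measurable_fderiv ℝ f).prodMk measurable_id)).add (measurable_const.mul hf)

variable (μ : Measure E) [μ.IsAddHaarMeasure]

lemma setIntegral_smul_set {G : E → ℝ} {t : ℝ} (ht : 0 < t) (S : Set E) :
    ∫ x in t • S, G x ∂μ = t ^ finrank ℝ E * ∫ y in S, G (t • y) ∂μ := by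
  rw [Measure.setIntegral_comp_smul_of_pos μ G S ht, smul_eq_mul,
    mul_inv_cancel_left₀ (pow_pos ht _).ne']

lemma inv_mul_setIntegral_smul_set {G : E → ℝ} {t : ℝ} (ht : 0 < t) (S : Set E) :
    t⁻¹ * ∫ x in t • S, G x ∂μ = ∫ y in S, t ^ finrank ℝ E * t⁻¹ * G (t • y) ∂μ := by
  rw [setIntegral_smul_set μ ht, integral_const_mul]
  ring

lemma integrable_pow_finrank_mul_inv_mul_comp_smul {G : E → ℝ} (hGm : Measurable G)
    (hG : Integrable G μ) {ε s : ℝ} (hε : 0 < ε) (S : Set E) :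
    Integrable (fun p : ℝ × E => p.1 ^ finrank ℝ E * p.1⁻¹ * G (p.1 • p.2))
      ((volume.restrict (Ioc ε s)).prod (μ.restrict S)) := by
  have hmeas : AEStronglyMeasurable
      (fun p : ℝ × E => p.1 ^ finrank ℝ E * p.1⁻¹ * G (p.1 • p.2))
      ((volume.restrict (Ioc ε s)).prod (μ.restrict S)) := by
    fun_prop
  refine (integrable_prod_iff hmeas).2 ⟨?_, ?_⟩
  · filter_upwards [ae_restrict_mem measurableSet_Ioc] with t ht
    exact ((hG.comp_smul (hε.trans ht.1).ne').const_mul _).restrict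
  · refine Integrable.mono' (integrable_const (ε⁻¹ * ∫ x, ‖G x‖ ∂μ))
      hmeas.norm.integral_prod_right' ?_
    filter_upwards [ae_restrict_mem measurableSet_Ioc] with t ht
    have ht0 : 0 < t := hε.trans ht.1
    have hslice : ∫ y, ‖t ^ finrank ℝ E * t⁻¹ * G (t • y)‖ ∂μ = t⁻¹ * ∫ x, ‖G x‖ ∂μ := by
      have := inv_mul_setIntegral_smul_set μ ht0 univ (G := fun x => ‖G x‖)
      simp only [smul_set_univ₀ ht0.ne', Measure.restrict_univ] at this
      rw [this]
      refine integral_congr_ae (ae_of_all _ fun y => ?_)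
      simp only [norm_mul, norm_inv, norm_pow, Real.norm_of_nonneg ht0.le]
    rw [Real.norm_of_nonneg (integral_nonneg fun _ => norm_nonneg _)]
    calc ∫ y in S, ‖t ^ finrank ℝ E * t⁻¹ * G (t • y)‖ ∂μ
        ≤ ∫ y, ‖t ^ finrank ℝ E * t⁻¹ * G (t • y)‖ ∂μ :=
          setIntegral_le_integral ((hG.comp_smul ht0.ne').const_mul _).norm
            (.of_forall fun _ => norm_nonneg _)
      _ = t⁻¹ * ∫ x, ‖G x‖ ∂μ := hslice
      _ ≤ ε⁻¹ * ∫ x, ‖G x‖ ∂μ := by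
          gcongr
          exact ht.1.le

theorem integral_Ioc_inv_mul_setIntegral_divRadialField {f : E → ℝ} (hf : Differentiable ℝ f)
    (hfi : Integrable f μ) (hf'i : Integrable (fun x => fderiv ℝ f x x) μ)
    (S : Set E) {ε s : ℝ} (hε : 0 < ε) (hεs : ε ≤ s) :
    ∫ t in Ioc ε s, t⁻¹ * ∫ x in t • S, divRadialField f x ∂μ
      = ∫ x in s • S, f x ∂μ - ∫ x in ε • S, f x ∂μ := by
  have hs : 0 < s := hε.trans_le hεs
  have hint := integrable_pow_finrank_mul_inv_mul_comp_smul μ (s := s)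
    (measurable_divRadialField hf.continuous.measurable)
    (hf'i.add (hfi.const_mul (finrank ℝ E : ℝ))) hε S
  have hFTC : ∀ᵐ y ∂μ.restrict S,
      ∫ t in Ioc ε s, t ^ finrank ℝ E * t⁻¹ * divRadialField f (t • y)
        = s ^ finrank ℝ E * f (s • y) - ε ^ finrank ℝ E * f (ε • y) := by
    filter_upwards [hint.prod_left_ae] with y hy
    rw [← intervalIntegral.integral_of_le hεs]
    refine intervalIntegral.integral_eq_sub_of_hasDerivAt
      (f := fun t => t ^ finrank ℝ E * f (t • y)) (fun t ht => ?_)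
      ((intervalIntegrable_iff_integrableOn_Ioc_of_le hεs).2 hy)
    have ht0 : 0 < t := hε.trans_le (Set.uIcc_of_le hεs ▸ ht).1
    exact hasDerivAt_pow_finrank_mul_comp_smul_s6 ht0.ne' (hf _)
  calc ∫ t in Ioc ε s, t⁻¹ * ∫ x in t • S, divRadialField f x ∂μ
      = ∫ t in Ioc ε s, ∫ y in S, t ^ finrank ℝ E * t⁻¹ * divRadialField f (t • y) ∂μ :=
        setIntegral_congr_fun measurableSet_Ioc fun t ht =>
          inv_mul_setIntegral_smul_set μ (hε.trans ht.1) S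
    _ = ∫ y in S, (∫ t in Ioc ε s, t ^ finrank ℝ E * t⁻¹ * divRadialField f (t • y)) ∂μ :=
        integral_integral_swap hint
    _ = ∫ y in S, (s ^ finrank ℝ E * f (s • y) - ε ^ finrank ℝ E * f (ε • y)) ∂μ :=
        integral_congr_ae hFTC
    _ = ∫ x in s • S, f x ∂μ - ∫ x in ε • S, f x ∂μ := by
        rw [integral_sub ((hfi.comp_smul hs.ne').const_mul _).restrict
          ((hfi.comp_smul hε.ne').const_mul _).restrict, integral_const_mul, integral_const_mul,
          setIntegral_smul_set μ hs, setIntegral_smul_set μ hε]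

end Scaling

lemma setOf_le_eq_smul_setOf_le_one {E : Type*} [AddCommGroup E] [Module ℝ E] {φ : E → ℝ}
    (hφ : ∀ (c : ℝ) (x : E), φ (c • x) = c * φ x) {t : ℝ} (ht : 0 < t) :
    {x | φ x ≤ t} = t • {x | φ x ≤ 1} := by
  ext x
  rw [mem_smul_set_iff_inv_smul_mem₀ ht.ne', mem_ofPred_eq, mem_ofPred_eq, hφ,
    inv_mul_le_one₀ ht]

lemma toReal_withDensity_ofReal_apply {α : Type*} [MeasurableSpace α] {μ : Measure α}
    {f : α → ℝ} (hf : 0 ≤ f) (hfi : Integrable f μ) {A : Set α} (hA : MeasurableSet A) :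
    (μ.withDensity (fun x => ENNReal.ofReal (f x)) A).toReal = ∫ x in A, f x ∂μ := by
  rw [withDensity_apply _ hA, ← ofReal_integral_eq_lintegral_ofReal hfi.integrableOn
    (.of_forall hf), ENNReal.toReal_ofReal (setIntegral_nonneg hA fun x _ => hf x)]

theorem integrated_density_representation_general
    (n : ℕ)
    (f : EuclideanSpace ℝ (Fin n) → ℝ)
    (hf_nonneg : ∀ x, 0 ≤ f x)
    (hf_diff : ContDiff ℝ 1 f)
    (hf_prob : ∫ x, f x = 1)
    (hf_int : Integrable (fun x : EuclideanSpace ℝ (Fin n) => (inner ℝ x (gradient f x) : ℝ)))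
    (μ : Measure (EuclideanSpace ℝ (Fin n)))
    (hμ : μ = volume.withDensity (fun x => ENNReal.ofReal (f x))) :
    ∀ ε s : ℝ, 0 < ε → ε < s →
      (∫ t in Set.Ioc ε s, (1 / t) * ∫ x : EuclideanSpace ℝ (Fin n),
          Set.indicator {y : EuclideanSpace ℝ (Fin n) | ∑ i, y i ≤ t}
            (fun y => (inner ℝ y (gradient f y) : ℝ) + n * f y) x)
        = (μ {x | ∑ i, x i ≤ s}).toReal - (μ {x | ∑ i, x i ≤ ε}).toReal := by
  intro ε s hε hεs
  set H := {y : EuclideanSpace ℝ (Fin n) | ∑ i, y i ≤ 1}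
  have hfi : Integrable f := .of_integral_ne_zero (by simp [hf_prob])
  have hf'i : Integrable fun x => fderiv ℝ f x x := by simpa using hf_int
  have hdiv : (fun y => (inner ℝ y (gradient f y) : ℝ) + n * f y) = divRadialField f := by
    ext y
    simp [divRadialField]
  have hmeas (t : ℝ) : MeasurableSet {y : EuclideanSpace ℝ (Fin n) | ∑ i, y i ≤ t} :=
    measurableSet_le (by fun_prop) measurable_const
  have hsublevel {t : ℝ} (ht : 0 < t) :
      {y : EuclideanSpace ℝ (Fin n) | ∑ i, y i ≤ t} = t • H :=
    setOf_le_eq_smul_setOf_le_one (φ := fun y : EuclideanSpace ℝ (Fin n) => ∑ i, y i)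
      (by simp [Finset.mul_sum]) ht
  calc _ = ∫ t in Ioc ε s, t⁻¹ * ∫ x in t • H, divRadialField f x :=
        setIntegral_congr_fun measurableSet_Ioc fun t ht => by
          rw [one_div, integral_indicator (hmeas t), hdiv, hsublevel (hε.trans ht.1)]
    _ = (∫ x in s • H, f x) - ∫ x in ε • H, f x :=
        integral_Ioc_inv_mul_setIntegral_divRadialField volume
          (hf_diff.differentiable one_ne_zero) hfi hf'i H hε hεs.le
    _ = _ := by
        rw [hμ, toReal_withDensity_ofReal_apply hf_nonneg hfi (hmeas s),
          toReal_withDensity_ofReal_apply hf_nonneg hfi (hmeas ε), hsublevel hε,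
          hsublevel (hε.trans hεs)]

/-- Let `f` be a continuously differentiable probability density on `ℝⁿ`
(`n ≥ 1`) with `∫ |⟨x, ∇f(x)⟩| dx < ∞`, and `μ` the law of `X ∼ f`.  For all `0 < ε < s`,
`∫_ε^s (1/t) [∫ 1{x₁+⋯+xₙ ≤ t} (⟨x, ∇f(x)⟩ + n f(x)) dx] dt
  = μ{∑xᵢ ≤ s} − μ{∑xᵢ ≤ ε}`. -/
theorem integrated_density_representation
    (n : ℕ) (hn : 1 ≤ n)
    (f : EuclideanSpace ℝ (Fin n) → ℝ)
    (hf_nonneg : ∀ x, 0 ≤ f x)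
    (hf_diff : ContDiff ℝ 1 f)
    (hf_prob : ∫ x, f x = 1)
    (hf_int : Integrable (fun x : EuclideanSpace ℝ (Fin n) => (inner ℝ x (gradient f x) : ℝ)))
    (μ : Measure (EuclideanSpace ℝ (Fin n)))
    (hμ : μ = volume.withDensity (fun x => ENNReal.ofReal (f x))) :
    ∀ ε s : ℝ, 0 < ε → ε < s →
      (∫ t in Set.Ioc ε s, (1 / t) * ∫ x : EuclideanSpace ℝ (Fin n),
          Set.indicator {y : EuclideanSpace ℝ (Fin n) | ∑ i, y i ≤ t}
            (fun y => (inner ℝ y (gradient f y) : ℝ) + n * f y) x)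
        = (μ {x | ∑ i, x i ≤ s}).toReal - (μ {x | ∑ i, x i ≤ ε}).toReal :=
  integrated_density_representation_general n f hf_nonneg hf_diff hf_prob hf_int μ hμ
end

section
/- For every u = (u₁,…,uₙ) ∈ (0,1]ⁿ, P(U₁ ≤ u₁, …, Uₙ ≤ uₙ) = φ(ψ(u₁) + ⋯ + ψ(uₙ)). That is, the Marshall–Olkin construction produces a random vector whose joint distribution function of the uniforms is the Archimedean copula with generator ψ. -/
/-!
Since `φ` is strictly decreasing, `φ(Eᵢ/Z) ≤ uᵢ` iff `ψ(uᵢ) Z ≤ Eᵢ`. Conditionally on `Z = z` these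
are independent exponential tail events of probabilities `e^{-ψ(uᵢ) z}`; multiplying them and
integrating against the law of `Z` gives `E[e^{-(∑ ψ(uᵢ)) Z}] = φ(∑ ψ(uᵢ))`.
-/

open MeasureTheory ProbabilityTheory Set

namespace ProbabilityTheory

variable {r : ℝ}

instance nullSingletonClass_expMeasure : NullSingletonClass (expMeasure r) := by
  unfold expMeasure gammaMeasure; infer_instance

lemma expMeasure_Iic (hr : 0 < r) {t : ℝ} (ht : 0 ≤ t) :
    expMeasure r (Iic t) = ENNReal.ofReal (1 - Real.exp (-(r * t))) := by
  have := isProbabilityMeasure_expMeasure hr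
  rw [← ofReal_cdf, cdf_expMeasure_eq hr, if_pos ht]

lemma ae_pos_expMeasure (hr : 0 < r) : ∀ᵐ x ∂expMeasure r, 0 < x := by
  rw [ae_iff]
  simp only [not_lt]
  exact (expMeasure_Iic hr le_rfl).trans (by simp)

lemma expMeasure_Ici (hr : 0 < r) {t : ℝ} (ht : 0 ≤ t) :
    expMeasure r (Ici t) = ENNReal.ofReal (Real.exp (-(r * t))) := by
  have := isProbabilityMeasure_expMeasure hr
  have hle : 0 ≤ 1 - Real.exp (-(r * t)) :=
    sub_nonneg.mpr (Real.exp_le_one_iff.mpr (neg_nonpos.mpr (mul_nonneg hr.le ht)))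
  rw [← compl_Iio, prob_compl_eq_one_sub measurableSet_Iio, measure_congr Iio_ae_eq_Iic,
    expMeasure_Iic hr ht, ← ENNReal.ofReal_one, ← ENNReal.ofReal_sub _ hle, sub_sub_cancel]

lemma pi_expMeasure_pi_Ici {ι : Type*} [Fintype ι] (hr : 0 < r) {t : ι → ℝ} (ht : ∀ i, 0 ≤ t i) :
    Measure.pi (fun _ : ι => expMeasure r) (univ.pi fun i => Ici (t i)) =
      ENNReal.ofReal (Real.exp (-(r * ∑ i, t i))) := by
  have := isProbabilityMeasure_expMeasure hr
  rw [Measure.pi_pi, Finset.prod_congr rfl fun i _ => expMeasure_Ici hr (ht i),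
    ← ENNReal.ofReal_prod_of_nonneg fun i _ => (Real.exp_pos _).le, ← Real.exp_sum,
    Finset.mul_sum, Finset.sum_neg_distrib]

section LaplaceTransform

variable {Ω : Type*} [MeasurableSpace Ω] {P : Measure Ω} {Z : Ω → ℝ}

lemma integrable_exp_neg_mul [IsFiniteMeasure P] (hZ : AEMeasurable Z P)
    (hZnn : ∀ᵐ ω ∂P, 0 ≤ Z ω) {s : ℝ} (hs : 0 ≤ s) :
    Integrable (fun ω => Real.exp (-s * Z ω)) P := by
  refine Integrable.mono' (integrable_const 1) (by fun_prop) ?_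
  filter_upwards [hZnn] with ω hω
  rw [Real.norm_eq_abs, Real.abs_exp, Real.exp_le_one_iff]
  nlinarith

lemma strictAntiOn_integral_exp_neg_mul [IsFiniteMeasure P] [NeZero P] (hZ : AEMeasurable Z P)
    (hZpos : ∀ ω, 0 < Z ω) :
    StrictAntiOn (fun s => ∫ ω, Real.exp (-s * Z ω) ∂P) (Ici 0) := by
  intro s hs t ht hst
  have hint {s : ℝ} (hs : s ∈ Ici 0) : Integrable (fun ω => Real.exp (-s * Z ω)) P :=
    integrable_exp_neg_mul hZ (ae_of_all _ fun ω => (hZpos ω).le) hs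
  have hlt (ω : Ω) : Real.exp (-t * Z ω) < Real.exp (-s * Z ω) :=
    Real.exp_lt_exp.mpr (by nlinarith [hZpos ω])
  have hsupp : Function.support (fun ω => Real.exp (-s * Z ω) - Real.exp (-t * Z ω)) = univ :=
    eq_univ_of_forall fun ω => (sub_pos.mpr (hlt ω)).ne'
  rw [← sub_pos, ← integral_sub (hint hs) (hint ht), integral_pos_iff_support_of_nonneg
    (fun ω => (sub_pos.mpr (hlt ω)).le) ((hint hs).sub (hint ht)), hsupp]
  exact Measure.measure_univ_pos.mpr (NeZero.ne P)

end LaplaceTransform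

lemma iIndepFun.map_pi_prodMk_eq_pi_prod {Ω ι β : Type*} [MeasurableSpace Ω] [MeasurableSpace β]
    [Fintype ι] {P : Measure Ω} [IsProbabilityMeasure P] {Z : Ω → β} {E : ι → Ω → β}
    (hZ : Measurable Z) (hE : ∀ i, Measurable (E i))
    (hindep : iIndepFun (fun o : Option ι => o.elim Z E) P) :
    P.map (fun ω => ((fun i => E i ω), Z ω)) = (Measure.pi fun i => P.map (E i)).prod (P.map Z) := by
  have hmeas (o : Option ι) : Measurable (o.elim Z E) := by cases o <;> simp [hZ, hE]
  have hpi := hindep.map_fun_eq_pi_map fun o => (hmeas o).aemeasurable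
  rw [← Measure.pi_map_piOptionEquivProd] at hpi
  have := congrArg (Measure.map (MeasurableEquiv.piOptionEquivProd fun _ => β)) hpi
  rwa [Measure.map_map (MeasurableEquiv.measurable _) (measurable_pi_lambda _ hmeas),
    MeasurableEquiv.map_map_symm] at this

lemma measurableSet_setOf_forall_mul_le {ι : Type*} [Countable ι] (a : ι → ℝ) :
    MeasurableSet {p : (ι → ℝ) × ℝ | ∀ i, a i * p.2 ≤ p.1 i} := by
  simp only [ofPred_forall]
  exact .iInter fun i => measurableSet_le (by fun_prop) (by fun_prop)

lemma pi_expMeasure_prod_setOf_forall_mul_le {ι : Type*} [Fintype ι] (hr : 0 < r)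
    (ν : Measure ℝ) [SFinite ν] (hν : ∀ᵐ z ∂ν, 0 ≤ z) {a : ι → ℝ} (ha : ∀ i, 0 ≤ a i) :
    ((Measure.pi fun _ : ι => expMeasure r).prod ν) {p | ∀ i, a i * p.2 ≤ p.1 i} =
      ∫⁻ z, ENNReal.ofReal (Real.exp (-(r * ∑ i, a i) * z)) ∂ν := by
  have := isProbabilityMeasure_expMeasure hr
  rw [Measure.prod_apply_symm (measurableSet_setOf_forall_mul_le a)]
  refine lintegral_congr_ae ?_
  filter_upwards [hν] with z hz
  have hslice : (fun x => (x, z)) ⁻¹' {p : (ι → ℝ) × ℝ | ∀ i, a i * p.2 ≤ p.1 i} =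
      univ.pi fun i => Ici (a i * z) := by
    ext x; simp [Pi.le_def]
  rw [hslice, pi_expMeasure_pi_Ici hr fun i => mul_nonneg (ha i) hz, ← Finset.sum_mul, neg_mul,
    mul_assoc]

lemma measure_forall_mul_le_eq_ofReal_integral {Ω ι : Type*} [MeasurableSpace Ω] [Fintype ι]
    {P : Measure Ω} [IsProbabilityMeasure P] (hr : 0 < r) {Z : Ω → ℝ} {E : ι → Ω → ℝ}
    (hZ : Measurable Z) (hZnn : ∀ᵐ ω ∂P, 0 ≤ Z ω) (hE : ∀ i, Measurable (E i))
    (hEexp : ∀ i, P.map (E i) = expMeasure r)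
    (hindep : iIndepFun (fun o : Option ι => o.elim Z E) P) {a : ι → ℝ} (ha : ∀ i, 0 ≤ a i) :
    P {ω | ∀ i, a i * Z ω ≤ E i ω} =
      ENNReal.ofReal (∫ ω, Real.exp (-(r * ∑ i, a i) * Z ω) ∂P) := by
  have hs : 0 ≤ r * ∑ i, a i := mul_nonneg hr.le (Finset.sum_nonneg fun i _ => ha i)
  calc P {ω | ∀ i, a i * Z ω ≤ E i ω}
      = P.map (fun ω => ((fun i => E i ω), Z ω)) {p | ∀ i, a i * p.2 ≤ p.1 i} := by
        rw [Measure.map_apply (by fun_prop) (measurableSet_setOf_forall_mul_le a)]; rfl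
    _ = ∫⁻ z, ENNReal.ofReal (Real.exp (-(r * ∑ i, a i) * z)) ∂P.map Z := by
        rw [hindep.map_pi_prodMk_eq_pi_prod hZ hE, funext hEexp,
          pi_expMeasure_prod_setOf_forall_mul_le hr _ (ae_map_iff hZ.aemeasurable
            measurableSet_Ici |>.mpr hZnn) ha]
    _ = ENNReal.ofReal (∫ ω, Real.exp (-(r * ∑ i, a i) * Z ω) ∂P) := by
        rw [lintegral_map (by fun_prop) hZ, ofReal_integral_eq_lintegral_ofReal
          (integrable_exp_neg_mul hZ.aemeasurable hZnn hs) (ae_of_all _ fun _ => (Real.exp_pos _).le)]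

end ProbabilityTheory

theorem marshallOlkin_archimedean_copula_general
    {Ω : Type*} [MeasurableSpace Ω] (P : Measure Ω) [IsProbabilityMeasure P]
    (n : ℕ)
    (Z : Ω → ℝ) (hZmeas : Measurable Z) (hZpos : ∀ ω, 0 < Z ω)
    (φ ψ : ℝ → ℝ)
    (hφ : ∀ s : ℝ, 0 ≤ s → φ s = ∫ ω, Real.exp (-s * Z ω) ∂P)
    (hφψ : ∀ u ∈ Set.Ioc (0 : ℝ) 1, φ (ψ u) = u)
    (hψ_nonneg : ∀ u ∈ Set.Ioc (0 : ℝ) 1, 0 ≤ ψ u)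
    (E : Fin n → Ω → ℝ) (hEmeas : ∀ i, Measurable (E i))
    (hEexp : ∀ i, Measure.map (E i) P = expMeasure 1)
    (hindep : iIndepFun (m := fun _ : Option (Fin n) => (inferInstance : MeasurableSpace ℝ))
      (fun o : Option (Fin n) => o.elim Z E) P) :
    ∀ u : Fin n → ℝ, (∀ i, u i ∈ Set.Ioc (0 : ℝ) 1) →
      P {ω | ∀ i, φ (E i ω / Z ω) ≤ u i} = ENNReal.ofReal (φ (∑ i, ψ (u i))) := by
  intro u hu
  have hψu (i : Fin n) : 0 ≤ ψ (u i) := hψ_nonneg _ (hu i)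
  have hφ_anti : StrictAntiOn φ (Ici 0) :=
    (strictAntiOn_integral_exp_neg_mul hZmeas.aemeasurable hZpos).congr fun s hs => (hφ s hs).symm
  have hEpos : ∀ᵐ ω ∂P, ∀ i, 0 < E i ω := ae_all_iff.mpr fun i =>
    ae_of_ae_map (hEmeas i).aemeasurable (by rw [hEexp i]; exact ae_pos_expMeasure one_pos)
  have hevent : {ω | ∀ i, φ (E i ω / Z ω) ≤ u i} =ᵐ[P] {ω | ∀ i, ψ (u i) * Z ω ≤ E i ω} := by
    filter_upwards [hEpos] with ω hω
    refine propext (forall_congr' fun i => ?_)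
    rw [← le_div_iff₀ (hZpos ω), ← hφ_anti.le_iff_ge (div_nonneg (hω i).le (hZpos ω).le) (hψu i),
      hφψ _ (hu i)]
  rw [measure_congr hevent, measure_forall_mul_le_eq_ofReal_integral one_pos hZmeas
    (ae_of_all _ fun ω => (hZpos ω).le) hEmeas hEexp hindep hψu,
    hφ _ (Finset.sum_nonneg fun i _ => hψu i), one_mul]

/-- Let `Z > 0` be a random variable, `φ(s) = E[e^{-sZ}]` its
Laplace transform with inverse `ψ : (0,1] → [0,∞)`, and let `E₁, …, Eₙ` be i.i.d.
standard exponentials independent of `Z`.  Setting `Uᵢ = φ(Eᵢ/Z)`, for every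
`u ∈ (0,1]ⁿ` we have `P(U₁ ≤ u₁, …, Uₙ ≤ uₙ) = φ(ψ(u₁) + ⋯ + ψ(uₙ))`:
the Marshall–Olkin construction yields the Archimedean copula with generator `ψ`. -/
theorem marshallOlkin_archimedean_copula
    {Ω : Type*} [MeasurableSpace Ω] (P : Measure Ω) [IsProbabilityMeasure P]
    (n : ℕ)
    (Z : Ω → ℝ) (hZmeas : Measurable Z) (hZpos : ∀ ω, 0 < Z ω)
    (φ ψ : ℝ → ℝ)
    (hφ : ∀ s : ℝ, 0 ≤ s → φ s = ∫ ω, Real.exp (-s * Z ω) ∂P)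
    (hφψ : ∀ u ∈ Set.Ioc (0 : ℝ) 1, φ (ψ u) = u)
    (hψφ : ∀ s : ℝ, 0 ≤ s → ψ (φ s) = s)
    (hψ_nonneg : ∀ u ∈ Set.Ioc (0 : ℝ) 1, 0 ≤ ψ u)
    (E : Fin n → Ω → ℝ) (hEmeas : ∀ i, Measurable (E i))
    (hEexp : ∀ i, Measure.map (E i) P = expMeasure 1)
    (hindep : iIndepFun (m := fun _ : Option (Fin n) => (inferInstance : MeasurableSpace ℝ))
      (fun o : Option (Fin n) => o.elim Z E) P) :
    ∀ u : Fin n → ℝ, (∀ i, u i ∈ Set.Ioc (0 : ℝ) 1) →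
      P {ω | ∀ i, φ (E i ω / Z ω) ≤ u i} = ENNReal.ofReal (φ (∑ i, ψ (u i))) :=
  marshallOlkin_archimedean_copula_general P n Z hZmeas hZpos φ ψ hφ hφψ hψ_nonneg E hEmeas hEexp
    hindep
end

section
/- The random vector U = (U₁,…,Uₙ) has joint probability density c(u) = φ^{(n)}(ψ(u₁) + ⋯ + ψ(uₙ)) · ∏_{i=1}^{n} ψ'(uᵢ) on (0,1)ⁿ, where φ^{(n)} denotes the n-th derivative of φ (which satisfies φ^{(k)}(s) = E[(−Z)^k e^{−sZ}] for s > 0); that is, for every Borel set B ⊆ (0,1)ⁿ, P(U ∈ B) = ∫_B c(u) du. -/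
/-!
Conditionally on `Z = z > 0`, the vector `(E₁, …, Eₙ)` has density `∏ e^{-xᵢ}` on `[0, ∞)ⁿ`, and
`U ∈ B` exactly when `E = (z ψ(uᵢ))ᵢ` for some `u ∈ B`. The change of variables
`u ↦ (z ψ(uᵢ))ᵢ`, whose Jacobian is diagonal, gives
`P(U ∈ B | Z = z) = ∫_B ∏ |z ψ'(uᵢ)| e^{-z ∑ ψ(uᵢ)} du`.
Integrating against the law of `Z` and exchanging the integrals, the inner integral is
`E[Zⁿ e^{-sZ}] ∏ |ψ'(uᵢ)|` with `s = ∑ ψ(uᵢ)`, which is `φ⁽ⁿ⁾(s) ∏ ψ'(uᵢ)` because `ψ` is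
decreasing.
-/

open MeasureTheory ProbabilityTheory Set
open scoped ENNReal

theorem lintegral_fin_nat_prod_eq_prod {n : ℕ} {E : Type*} [MeasurableSpace E]
    {μ : Fin n → Measure E} [∀ i, SigmaFinite (μ i)] {f : Fin n → E → ℝ≥0∞}
    (hf : ∀ i, Measurable (f i)) :
    ∫⁻ x : Fin n → E, ∏ i, f i (x i) ∂(Measure.pi μ) = ∏ i, ∫⁻ x, f i x ∂(μ i) := by
  induction n with
  | zero => simp
  | succ n ih =>
      calc
        _ = ∫⁻ x : E × (Fin n → E), f 0 x.1 * ∏ i : Fin n, f i.succ (x.2 i)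
            ∂((μ 0).prod (Measure.pi (fun i ↦ μ i.succ))) := by
          rw [← ((measurePreserving_piFinSuccAbove μ 0).symm).lintegral_comp_emb
            (MeasurableEquiv.measurableEmbedding _)]
          simp_rw [MeasurableEquiv.piFinSuccAbove_symm_apply, Fin.insertNthEquiv,
            Fin.prod_univ_succ, Fin.insertNth_zero, Equiv.coe_fn_mk, Fin.cons_succ,
            Fin.zero_succAbove, Fin.cons_zero, cast_eq]
        _ = (∫⁻ x, f 0 x ∂μ 0) * ∏ i : Fin n, ∫⁻ x, f i.succ x ∂(μ i.succ) := by
          have hrest : Measurable fun y : Fin n → E ↦ ∏ i : Fin n, f i.succ (y i) :=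
            Finset.measurable_prod _ fun i _ ↦ (hf i.succ).comp (measurable_pi_apply i)
          rw [← ih fun i ↦ hf i.succ, ← lintegral_prod_mul (hf 0).aemeasurable hrest.aemeasurable]
        _ = ∏ i, ∫⁻ x, f i x ∂(μ i) := by rw [Fin.prod_univ_succ]

theorem lintegral_fintype_prod_eq_prod {ι : Type*} [Fintype ι] {E : Type*} [MeasurableSpace E]
    {μ : ι → Measure E} [∀ i, SigmaFinite (μ i)] {f : ι → E → ℝ≥0∞}
    (hf : ∀ i, Measurable (f i)) :
    ∫⁻ x : ι → E, ∏ i, f i (x i) ∂(Measure.pi μ) = ∏ i, ∫⁻ x, f i x ∂(μ i) := by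
  let e := (Fintype.equivFin ι).symm
  rw [← (measurePreserving_piCongrLeft μ e).lintegral_comp_emb
    (MeasurableEquiv.measurableEmbedding _)]
  simp_rw [← e.prod_comp, MeasurableEquiv.coe_piCongrLeft, Equiv.piCongrLeft_apply_apply]
  exact lintegral_fin_nat_prod_eq_prod fun i ↦ hf (e i)

theorem MeasureTheory.Measure.pi_withDensity {ι : Type*} [Fintype ι] {E : Type*}
    [MeasurableSpace E] {μ : ι → Measure E} [∀ i, SigmaFinite (μ i)] {f : ι → E → ℝ≥0∞}
    (hf : ∀ i, Measurable (f i)) [∀ i, SigmaFinite ((μ i).withDensity (f i))] :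
    Measure.pi (fun i ↦ (μ i).withDensity (f i))
      = (Measure.pi μ).withDensity (fun x ↦ ∏ i, f i (x i)) := by
  refine Measure.pi_eq fun s hs ↦ ?_
  rw [withDensity_apply _ (.univ_pi hs), Measure.restrict_pi_pi,
    lintegral_fintype_prod_eq_prod hf]
  exact Finset.prod_congr rfl fun i _ ↦ (withDensity_apply _ (hs i)).symm

theorem hasFDerivAt_pi_map {ι : Type*} [Fintype ι] {f f' : ℝ → ℝ} {u : ι → ℝ}
    (hf : ∀ i, HasDerivAt f (f' (u i)) (u i)) :
    HasFDerivAt (fun v i ↦ f (v i))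
      (ContinuousLinearMap.pi fun i ↦
        (ContinuousLinearMap.smulRight (1 : ℝ →L[ℝ] ℝ) (f' (u i))).comp
          (ContinuousLinearMap.proj i)) u :=
  hasFDerivAt_pi.2 fun i ↦ (hf i).hasFDerivAt.comp u (hasFDerivAt_apply i u)

theorem lintegral_image_pi_map_eq {ι : Type*} [Fintype ι] {f f' : ℝ → ℝ} {s : Set ℝ}
    {B : Set (ι → ℝ)} (hB : MeasurableSet B) (hBs : B ⊆ univ.pi fun _ ↦ s)
    (hf : ∀ x ∈ s, HasDerivAt f (f' x) x) (hinj : InjOn f s) (g : (ι → ℝ) → ℝ≥0∞) :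
    ∫⁻ x in (fun u i ↦ f (u i)) '' B, g x
      = ∫⁻ u in B, ENNReal.ofReal (∏ i, |f' (u i)|) * g (fun i ↦ f (u i)) := by
  have hmem : ∀ u ∈ B, ∀ i, u i ∈ s := fun u hu i ↦ hBs hu i (mem_univ i)
  rw [lintegral_image_eq_lintegral_abs_det_fderiv_mul volume hB
    (fun u hu ↦ (hasFDerivAt_pi_map fun i ↦ hf _ (hmem u hu i)).hasFDerivWithinAt)
    (fun u hu v hv huv ↦ funext fun i ↦ hinj (hmem u hu i) (hmem v hv i) (congrFun huv i))]
  simp [ContinuousLinearMap.det_pi, Finset.abs_prod]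

theorem ProbabilityTheory.iIndepFun.map_prodMk_eq_pi_prod {Ω α ι : Type*} [MeasurableSpace Ω]
    [MeasurableSpace α] {P : Measure Ω} [IsProbabilityMeasure P] [Fintype ι]
    {X : ι → Ω → α} {Y : Ω → α} (h : iIndepFun (fun o : Option ι ↦ o.elim Y X) P)
    (hX : ∀ i, Measurable (X i)) (hY : Measurable Y) :
    P.map (fun ω ↦ (fun i ↦ X i ω, Y ω))
      = (Measure.pi fun i ↦ P.map (X i)).prod (P.map Y) := by
  have hmeas : ∀ o : Option ι, Measurable (o.elim Y X) := fun o ↦ by cases o <;> simp [*]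
  have hlaw := (iIndepFun_iff_map_fun_eq_pi_map fun o ↦ (hmeas o).aemeasurable).1 h
  rw [← Measure.pi_map_piOptionEquivProd] at hlaw
  have := congrArg (Measure.map (MeasurableEquiv.piOptionEquivProd fun _ : Option ι ↦ α)) hlaw
  rwa [Measure.map_map (MeasurableEquiv.measurable _) (measurable_pi_lambda _ hmeas),
    Measure.map_map (MeasurableEquiv.measurable _) (MeasurableEquiv.measurable _),
    MeasurableEquiv.self_comp_symm, Measure.map_id] at this

theorem ProbabilityTheory.ae_nonneg_expMeasure (r : ℝ) : ∀ᵐ x ∂expMeasure r, 0 ≤ x :=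
  (ae_withDensity_iff (f := gammaPDF 1 r) (measurable_gammaPDFReal 1 r).ennreal_ofReal).2 <|
    .of_forall fun _ hx ↦ not_lt.1 fun hneg ↦ hx (gammaPDF_of_neg hneg)

theorem ofReal_setIntegral_eq_setLIntegral {α : Type*} [MeasurableSpace α] {μ : Measure α}
    {B : Set α} (hB : MeasurableSet B) {c : α → ℝ} {F : α → ℝ≥0∞}
    (hF : AEMeasurable F (μ.restrict B)) (hFc : ∀ u ∈ B, F u = ENNReal.ofReal (c u))
    (hc : ∀ u ∈ B, 0 ≤ c u) (hfin : ∫⁻ u in B, F u ∂μ ≠ ∞) :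
    ENNReal.ofReal (∫ u in B, c u ∂μ) = ∫⁻ u in B, F u ∂μ := by
  have hcF : c =ᵐ[μ.restrict B] fun u ↦ (F u).toReal := ae_restrict_of_forall_mem hB fun u hu ↦
    show c u = (F u).toReal by rw [hFc u hu, ENNReal.toReal_ofReal (hc u hu)]
  rw [integral_congr_ae hcF, integral_toReal hF (ae_lt_top' hF hfin), ENNReal.ofReal_toReal hfin]

theorem prod_abs_mul_mul_exp_eq {n : ℕ} {a : Fin n → ℝ} (ha : ∀ i, a i ≤ 0) {z : ℝ}
    (hz : 0 ≤ z) (s : ℝ) :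
    (∏ i, |z * a i|) * Real.exp (-(z * s)) = (-z) ^ n * Real.exp (-s * z) * ∏ i, a i := by
  have habs : ∀ i, |z * a i| = -z * a i := fun i ↦ by
    rw [abs_of_nonpos (mul_nonpos_of_nonneg_of_nonpos hz (ha i))]; ring
  rw [Finset.prod_congr rfl fun i _ ↦ habs i, Finset.prod_mul_distrib, Finset.prod_const,
    Finset.card_univ, Fintype.card_fin, neg_mul s, mul_comm s]
  ring

section Laplace

variable {Ω : Type*} [MeasurableSpace Ω] {P : Measure Ω} {Z : Ω → ℝ}

theorem integrable_exp_neg_mul [IsProbabilityMeasure P] (hZm : Measurable Z)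
    (hZ : ∀ ω, 0 ≤ Z ω) {s : ℝ} (hs : 0 ≤ s) :
    Integrable (fun ω ↦ Real.exp (-s * Z ω)) P := by
  refine (integrable_const 1).mono' (by fun_prop) (ae_of_all _ fun ω ↦ ?_)
  rw [Real.norm_eq_abs, abs_of_pos (Real.exp_pos _), Real.exp_le_one_iff]
  nlinarith [hZ ω]

theorem antitoneOn_integral_exp_neg_mul [IsProbabilityMeasure P] (hZm : Measurable Z)
    (hZ : ∀ ω, 0 ≤ Z ω) : AntitoneOn (fun s ↦ ∫ ω, Real.exp (-s * Z ω) ∂P) (Ici 0) :=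
  fun s hs t ht hst ↦ integral_mono (integrable_exp_neg_mul hZm hZ ht)
    (integrable_exp_neg_mul hZm hZ hs) fun ω ↦ Real.exp_le_exp.2 (by nlinarith [hZ ω])

theorem integrable_neg_pow_mul_exp_neg_mul {n : ℕ} (hZm : Measurable Z) (hZ : ∀ ω, 0 ≤ Z ω)
    (hZn : Integrable (fun ω ↦ Z ω ^ n) P) {s : ℝ} (hs : 0 ≤ s) :
    Integrable (fun ω ↦ (-Z ω) ^ n * Real.exp (-s * Z ω)) P := by
  refine hZn.mono' (by fun_prop) (ae_of_all _ fun ω ↦ ?_)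
  have hexp : Real.exp (-s * Z ω) ≤ 1 := Real.exp_le_one_iff.2 (by nlinarith [hZ ω])
  rw [norm_mul, norm_pow, norm_neg, Real.norm_of_nonneg (hZ ω),
    Real.norm_of_nonneg (Real.exp_pos _).le]
  exact mul_le_of_le_one_right (pow_nonneg (hZ ω) n) hexp

theorem integrable_prod_abs_mul_mul_exp {n : ℕ} (hZm : Measurable Z) (hZ : ∀ ω, 0 ≤ Z ω)
    (hZn : Integrable (fun ω ↦ Z ω ^ n) P) {a : Fin n → ℝ} (ha : ∀ i, a i ≤ 0) {s : ℝ}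
    (hs : 0 ≤ s) :
    Integrable (fun z ↦ (∏ i, |z * a i|) * Real.exp (-(z * s))) (P.map Z) := by
  rw [integrable_map_measure (by fun_prop) hZm.aemeasurable]
  exact ((integrable_neg_pow_mul_exp_neg_mul hZm hZ hZn hs).mul_const (∏ i, a i)).congr
    (ae_of_all _ fun ω ↦ (prod_abs_mul_mul_exp_eq ha (hZ ω) s).symm)

theorem integral_prod_abs_mul_mul_exp {n : ℕ} (hZm : Measurable Z) (hZ : ∀ ω, 0 ≤ Z ω)
    {a : Fin n → ℝ} (ha : ∀ i, a i ≤ 0) (s : ℝ) :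
    ∫ z, (∏ i, |z * a i|) * Real.exp (-(z * s)) ∂(P.map Z)
      = (∫ ω, (-Z ω) ^ n * Real.exp (-s * Z ω) ∂P) * ∏ i, a i := by
  rw [integral_map hZm.aemeasurable (by fun_prop), ← integral_mul_const]
  exact integral_congr_ae (ae_of_all _ fun ω ↦ prod_abs_mul_mul_exp_eq ha (hZ ω) s)

end Laplace

/- `φ` is only pinned down on `[0, ∞)`; clamping its argument at `0` makes the event measurable
without changing it, since the `Eᵢ` are almost surely nonnegative. -/
theorem measure_setOf_apply_div_mem_eq_lintegral {Ω ι : Type*} [MeasurableSpace Ω]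
    {P : Measure Ω} [IsProbabilityMeasure P] [Fintype ι] {Z : Ω → ℝ} {E : ι → Ω → ℝ}
    (hZm : Measurable Z) (hZ : ∀ ω, 0 ≤ Z ω) (hEm : ∀ i, Measurable (E i))
    (hE : ∀ i, P.map (E i) = expMeasure 1) (hindep : iIndepFun (fun o : Option ι ↦ o.elim Z E) P)
    {φ : ℝ → ℝ} (hφ : Measurable fun s ↦ φ (max s 0)) {B : Set (ι → ℝ)} (hB : MeasurableSet B) :
    P {ω | (fun i ↦ φ (E i ω / Z ω)) ∈ B}
      = ∫⁻ z, Measure.pi (fun _ : ι ↦ expMeasure 1) {x | (fun i ↦ φ (max (x i / z) 0)) ∈ B}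
          ∂(P.map Z) := by
  have := isProbabilityMeasure_expMeasure (r := 1) one_pos
  set S := {p : (ι → ℝ) × ℝ | (fun i ↦ φ (max (p.1 i / p.2) 0)) ∈ B}
  have hS : MeasurableSet S :=
    measurable_pi_lambda _ (fun i ↦ hφ.comp (measurable_fst.eval.div measurable_snd)) hB
  have hE0 : ∀ᵐ ω ∂P, ∀ i, 0 ≤ E i ω := ae_all_iff.2 fun i ↦
    ae_of_ae_map (hEm i).aemeasurable (hE i ▸ ae_nonneg_expMeasure 1)
  calc P {ω | (fun i ↦ φ (E i ω / Z ω)) ∈ B}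
      = P ((fun ω ↦ (fun i ↦ E i ω, Z ω)) ⁻¹' S) := by
        refine measure_congr (Filter.eventuallyEq_set.2 (hE0.mono fun ω hω ↦ ?_))
        simp only [S, mem_preimage, mem_ofPred_eq, max_eq_left (div_nonneg (hω _) (hZ ω))]
    _ = ((Measure.pi fun _ : ι ↦ expMeasure 1).prod (P.map Z)) S := by
        rw [← Measure.map_apply (by fun_prop) hS, hindep.map_prodMk_eq_pi_prod hEm hZm]
        simp only [hE]
    _ = _ := Measure.prod_apply_symm hS

namespace MarshallOlkin

/-- The conditional density of `U` at `u` given `Z = z`. -/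
noncomputable def condDensity {ι : Type*} [Fintype ι] (ψ ψ' : ℝ → ℝ) (z : ℝ) (u : ι → ℝ) : ℝ :=
  (∏ i, |z * ψ' (u i)|) * Real.exp (-(z * ∑ i, ψ (u i)))

variable {φ ψ ψ' : ℝ → ℝ}

theorem condDensity_nonneg {ι : Type*} [Fintype ι] (z : ℝ) (u : ι → ℝ) :
    0 ≤ condDensity ψ ψ' z u := by
  unfold condDensity; positivity

theorem psi_pos (hφ0 : φ 0 = 1) (hφψ : ∀ u ∈ Ioc (0 : ℝ) 1, φ (ψ u) = u)
    (hψ0 : ∀ u ∈ Ioc (0 : ℝ) 1, 0 ≤ ψ u) {u : ℝ} (hu : u ∈ Ioo (0 : ℝ) 1) : 0 < ψ u := by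
  refine (hψ0 u (Ioo_subset_Ioc_self hu)).lt_of_ne fun h ↦ hu.2.ne ?_
  rw [← hφψ u (Ioo_subset_Ioc_self hu), ← h, hφ0]

theorem antitoneOn_psi (hφ : AntitoneOn φ (Ici 0)) (hφψ : ∀ u ∈ Ioc (0 : ℝ) 1, φ (ψ u) = u)
    (hψ0 : ∀ u ∈ Ioc (0 : ℝ) 1, 0 ≤ ψ u) : AntitoneOn ψ (Ioc 0 1) := by
  intro u hu v hv huv
  by_contra! h
  have : v ≤ u := by
    simpa only [hφψ u hu, hφψ v hv] using hφ (hψ0 u hu) (hψ0 v hv) h.le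
  exact h.ne (by rw [le_antisymm huv this])

theorem psi'_nonpos (hφ : AntitoneOn φ (Ici 0)) (hφψ : ∀ u ∈ Ioc (0 : ℝ) 1, φ (ψ u) = u)
    (hψ0 : ∀ u ∈ Ioc (0 : ℝ) 1, 0 ≤ ψ u) {u : ℝ} (hu : u ∈ Ioo (0 : ℝ) 1)
    (hψ' : HasDerivAt ψ (ψ' u) u) : ψ' u ≤ 0 := by
  have hacc : AccPt u (Filter.principal (Ioo (0 : ℝ) 1)) := by
    simpa using (PerfectSpace.univ_preperfect u (mem_univ u)).nhds_inter (Ioo_mem_nhds hu.1 hu.2)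
  exact hψ'.hasDerivWithinAt.nonpos_of_antitoneOn hacc
    ((antitoneOn_psi hφ hφψ hψ0).mono Ioo_subset_Ioc_self)

theorem setOf_apply_div_mem_eq_image {ι : Type*} (hφ0 : φ 0 = 1)
    (hφψ : ∀ u ∈ Ioc (0 : ℝ) 1, φ (ψ u) = u) (hψφ : ∀ s : ℝ, 0 ≤ s → ψ (φ s) = s)
    (hψ0 : ∀ u ∈ Ioc (0 : ℝ) 1, 0 ≤ ψ u) {B : Set (ι → ℝ)}
    (hBs : B ⊆ univ.pi fun _ ↦ Ioo 0 1) {z : ℝ} (hz : 0 < z) :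
    {x : ι → ℝ | (fun i ↦ φ (max (x i / z) 0)) ∈ B} = (fun u i ↦ z * ψ (u i)) '' B := by
  ext x
  constructor
  · intro hx
    refine ⟨_, hx, funext fun i ↦ ?_⟩
    have hxi : 0 ≤ x i / z := by
      by_contra! hneg
      have := (hBs hx i (mem_univ i)).2
      simp [max_eq_right hneg.le, hφ0] at this
    simp only [max_eq_left hxi, hψφ _ hxi, mul_div_cancel₀ _ hz.ne']
  · rintro ⟨u, hu, rfl⟩
    have hui : ∀ i, u i ∈ Ioc (0 : ℝ) 1 := fun i ↦ Ioo_subset_Ioc_self (hBs hu i (mem_univ i))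
    simpa only [mem_ofPred_eq, mul_div_cancel_left₀ _ hz.ne', max_eq_left (hψ0 _ (hui _)),
      hφψ _ (hui _)] using hu

theorem pi_expMeasure_setOf_apply_div_mem {ι : Type*} [Fintype ι] (hφ0 : φ 0 = 1)
    (hφψ : ∀ u ∈ Ioc (0 : ℝ) 1, φ (ψ u) = u) (hψφ : ∀ s : ℝ, 0 ≤ s → ψ (φ s) = s)
    (hψ0 : ∀ u ∈ Ioc (0 : ℝ) 1, 0 ≤ ψ u) (hψ' : ∀ u ∈ Ioo (0 : ℝ) 1, HasDerivAt ψ (ψ' u) u)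
    {B : Set (ι → ℝ)} (hB : MeasurableSet B) (hBs : B ⊆ univ.pi fun _ ↦ Ioo 0 1) {z : ℝ}
    (hz : 0 < z) :
    Measure.pi (fun _ : ι ↦ expMeasure 1) {x | (fun i ↦ φ (max (x i / z) 0)) ∈ B}
      = ∫⁻ u in B, ENNReal.ofReal (condDensity ψ ψ' z u) := by
  have hinj : InjOn (fun u ↦ z * ψ u) (Ioo 0 1) := fun u hu v hv huv ↦ by
    rw [← hφψ u (Ioo_subset_Ioc_self hu), ← hφψ v (Ioo_subset_Ioc_self hv),
      mul_left_cancel₀ hz.ne' huv]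
  have hexp : expMeasure 1 = volume.withDensity (exponentialPDF 1) := rfl
  have : IsProbabilityMeasure (volume.withDensity (exponentialPDF 1)) :=
    hexp ▸ isProbabilityMeasure_expMeasure one_pos
  rw [setOf_apply_div_mem_eq_image hφ0 hφψ hψφ hψ0 hBs hz, hexp,
    Measure.pi_withDensity (f := fun _ ↦ exponentialPDF 1)
      fun _ ↦ (measurable_exponentialPDFReal 1).ennreal_ofReal, ← volume_pi,
    withDensity_apply' _ _, lintegral_image_pi_map_eq hB hBs
      (fun u hu ↦ (hψ' u hu).const_mul z) hinj]
  refine setLIntegral_congr_fun hB fun u hu ↦ ?_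
  have hψu : ∀ i, 0 ≤ z * ψ (u i) := fun i ↦
    mul_nonneg hz.le (hψ0 _ (Ioo_subset_Ioc_self (hBs hu i (mem_univ i))))
  simp_rw [exponentialPDF_of_nonneg (hψu _), one_mul]
  rw [condDensity, ← ENNReal.ofReal_prod_of_nonneg fun i _ ↦ (Real.exp_pos _).le,
    ← Real.exp_sum, ← ENNReal.ofReal_mul (Finset.prod_nonneg fun i _ ↦ abs_nonneg _),
    Finset.mul_sum, Finset.sum_neg_distrib]

theorem aemeasurable_condDensity {ι : Type*} [Fintype ι] {μ : Measure ℝ} [SFinite μ]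
    (hψ' : ∀ u ∈ Ioo (0 : ℝ) 1, HasDerivAt ψ (ψ' u) u) {B : Set (ι → ℝ)} (hB : MeasurableSet B)
    (hBs : B ⊆ univ.pi fun _ ↦ Ioo 0 1) :
    AEMeasurable (fun p : ℝ × (ι → ℝ) ↦ ENNReal.ofReal (condDensity ψ ψ' p.1 p.2))
      (μ.prod (volume.restrict B)) := by
  have hψ : ContinuousOn (fun u i ↦ ψ (u i)) (univ.pi fun _ : ι ↦ Ioo (0 : ℝ) 1) :=
    continuousOn_pi.2 fun i ↦ ContinuousOn.comp
      (fun x hx ↦ (hψ' x hx).continuousAt.continuousWithinAt) (continuous_apply i).continuousOn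
      fun u hu ↦ hu i (mem_univ i)
  have hΨ : AEMeasurable (fun u i ↦ ψ (u i)) (volume.restrict B) :=
    (hψ.aemeasurable (.univ_pi fun _ ↦ measurableSet_Ioo)).mono_set hBs
  have hΨ' : AEMeasurable (fun u i ↦ ψ' (u i)) (volume.restrict B) :=
    (measurable_pi_lambda _ fun i ↦ (measurable_deriv ψ).comp (measurable_pi_apply i)).aemeasurable
      |>.congr (ae_restrict_of_forall_mem hB fun u hu ↦
        funext fun i ↦ (hψ' _ (hBs hu i (mem_univ i))).deriv)
  have hH : Measurable fun q : ℝ × (ι → ℝ) × (ι → ℝ) ↦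
      ENNReal.ofReal ((∏ i, |q.1 * q.2.2 i|) * Real.exp (-(q.1 * ∑ i, q.2.1 i))) := by
    fun_prop
  have hq : AEMeasurable (fun p : ℝ × (ι → ℝ) ↦ (p.1, fun i ↦ ψ (p.2 i), fun i ↦ ψ' (p.2 i)))
      (μ.prod (volume.restrict B)) :=
    measurable_fst.aemeasurable.prodMk (hΨ.comp_snd.prodMk hΨ'.comp_snd)
  exact hH.comp_aemeasurable
    (f := fun p : ℝ × (ι → ℝ) ↦ (p.1, fun i ↦ ψ (p.2 i), fun i ↦ ψ' (p.2 i))) hq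

theorem iteratedDeriv_mul_prod_eq_integral {Ω : Type*} [MeasurableSpace Ω] {P : Measure Ω}
    [IsProbabilityMeasure P] {n : ℕ} {Z : Ω → ℝ} (hZm : Measurable Z) (hZ : ∀ ω, 0 ≤ Z ω)
    (hφ : ∀ s : ℝ, 0 ≤ s → φ s = ∫ ω, Real.exp (-s * Z ω) ∂P)
    (hφderiv : ∀ k ≤ n, ∀ s : ℝ, 0 < s →
      iteratedDeriv k φ s = ∫ ω, (-Z ω) ^ k * Real.exp (-s * Z ω) ∂P)
    (hφψ : ∀ u ∈ Ioc (0 : ℝ) 1, φ (ψ u) = u) (hψ0 : ∀ u ∈ Ioc (0 : ℝ) 1, 0 ≤ ψ u)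
    (hψ' : ∀ u ∈ Ioo (0 : ℝ) 1, HasDerivAt ψ (ψ' u) u) {u : Fin n → ℝ}
    (hu : ∀ i, u i ∈ Ioo (0 : ℝ) 1) :
    iteratedDeriv n φ (∑ i, ψ (u i)) * ∏ i, ψ' (u i) = ∫ z, condDensity ψ ψ' z u ∂(P.map Z) := by
  have hφ0 : φ 0 = 1 := by simp [hφ 0 le_rfl]
  have hφanti : AntitoneOn φ (Ici 0) :=
    (antitoneOn_integral_exp_neg_mul hZm hZ).congr fun s hs ↦ (hφ s hs).symm
  have hrepr : iteratedDeriv n φ (∑ i, ψ (u i))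
      = ∫ ω, (-Z ω) ^ n * Real.exp (-(∑ i, ψ (u i)) * Z ω) ∂P := by
    rcases n.eq_zero_or_pos with rfl | hn
    · simp [hφ 0 le_rfl]
    · have : Nonempty (Fin n) := Fin.pos_iff_nonempty.1 hn
      exact hφderiv n le_rfl _
        (Finset.sum_pos (fun i _ ↦ psi_pos hφ0 hφψ hψ0 (hu i)) Finset.univ_nonempty)
  unfold condDensity
  rw [hrepr, integral_prod_abs_mul_mul_exp hZm hZ
    fun i ↦ psi'_nonpos hφanti hφψ hψ0 (hu i) (hψ' _ (hu i))]

end MarshallOlkin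

open MarshallOlkin

theorem marshallOlkin_joint_density_general
    {Ω : Type*} [MeasurableSpace Ω] (P : Measure Ω) [IsProbabilityMeasure P]
    (n : ℕ)
    (Z : Ω → ℝ) (hZmeas : Measurable Z) (hZpos : ∀ ω, 0 < Z ω)
    (hZmom : Integrable (fun ω => Z ω ^ n) P)
    (φ ψ ψ' : ℝ → ℝ)
    (hφ : ∀ s : ℝ, 0 ≤ s → φ s = ∫ ω, Real.exp (-s * Z ω) ∂P)
    (hφderiv : ∀ k ≤ n, ∀ s : ℝ, 0 < s →
      iteratedDeriv k φ s = ∫ ω, (-Z ω) ^ k * Real.exp (-s * Z ω) ∂P)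
    (hφψ : ∀ u ∈ Set.Ioc (0 : ℝ) 1, φ (ψ u) = u)
    (hψφ : ∀ s : ℝ, 0 ≤ s → ψ (φ s) = s)
    (hψ_nonneg : ∀ u ∈ Set.Ioc (0 : ℝ) 1, 0 ≤ ψ u)
    (hψ_deriv : ∀ u ∈ Set.Ioo (0 : ℝ) 1, HasDerivAt ψ (ψ' u) u)
    (E : Fin n → Ω → ℝ) (hEmeas : ∀ i, Measurable (E i))
    (hEexp : ∀ i, Measure.map (E i) P = expMeasure 1)
    (hindep : iIndepFun
      (fun o : Option (Fin n) => o.elim Z E) P) :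
    ∀ B : Set (Fin n → ℝ), MeasurableSet B →
      B ⊆ Set.univ.pi (fun _ => Set.Ioo (0 : ℝ) 1) →
      P {ω | (fun i => φ (E i ω / Z ω)) ∈ B} =
        ENNReal.ofReal (∫ u in B,
          iteratedDeriv n φ (∑ i, ψ (u i)) * ∏ i, ψ' (u i)) := by
  intro B hB hBs
  have hZ0 : ∀ ω, 0 ≤ Z ω := fun ω ↦ (hZpos ω).le
  have hφ0 : φ 0 = 1 := by simp [hφ 0 le_rfl]
  have hφanti : AntitoneOn φ (Ici 0) :=
    (antitoneOn_integral_exp_neg_mul hZmeas hZ0).congr fun s hs ↦ (hφ s hs).symm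
  have hφmax : Antitone fun s ↦ φ (max s 0) := fun s t hst ↦
    hφanti (le_max_right s 0) (le_max_right t 0) (max_le_max_right 0 hst)
  have hmem : ∀ u ∈ B, ∀ i, u i ∈ Ioo (0 : ℝ) 1 := fun u hu i ↦ hBs hu i (mem_univ i)
  have hG := aemeasurable_condDensity (μ := P.map Z) hψ_deriv hB hBs
  have hP : P {ω | (fun i ↦ φ (E i ω / Z ω)) ∈ B}
      = ∫⁻ u in B, ∫⁻ z, ENNReal.ofReal (condDensity ψ ψ' z u) ∂(P.map Z) := by
    rw [measure_setOf_apply_div_mem_eq_lintegral hZmeas hZ0 hEmeas hEexp hindep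
      hφmax.measurable hB, ← lintegral_lintegral_swap hG]
    refine lintegral_congr_ae ((ae_map_iff hZmeas.aemeasurable measurableSet_Ioi).2
      (ae_of_all _ hZpos) |>.mono fun z hz ↦ ?_)
    exact pi_expMeasure_setOf_apply_div_mem hφ0 hφψ hψφ hψ_nonneg hψ_deriv hB hBs hz
  have hc : ∀ u ∈ B, iteratedDeriv n φ (∑ i, ψ (u i)) * ∏ i, ψ' (u i)
      = ∫ z, condDensity ψ ψ' z u ∂(P.map Z) := fun u hu ↦
    iteratedDeriv_mul_prod_eq_integral hZmeas hZ0 hφ hφderiv hφψ hψ_nonneg hψ_deriv (hmem u hu)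
  rw [hP, ofReal_setIntegral_eq_setLIntegral hB hG.lintegral_prod_left' (fun u hu ↦ ?_)
    (fun u hu ↦ ?_) (hP ▸ measure_ne_top P _)]
  · rw [hc u hu, ofReal_integral_eq_lintegral_ofReal _ (ae_of_all _ fun z ↦ condDensity_nonneg z u)]
    exact integrable_prod_abs_mul_mul_exp hZmeas hZ0 hZmom
      (fun i ↦ psi'_nonpos hφanti hφψ hψ_nonneg (hmem u hu i) (hψ_deriv _ (hmem u hu i)))
      (Finset.sum_nonneg fun i _ ↦ hψ_nonneg _ (Ioo_subset_Ioc_self (hmem u hu i)))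
  · rw [hc u hu]
    exact integral_nonneg fun z ↦ condDensity_nonneg z u

/-- Let `Z > 0` with `E[Zⁿ] < ∞` have Laplace transform
`φ(s) = E[e^{-sZ}]` with inverse generator `ψ : (0,1] → [0,∞)`, continuously
differentiable on `(0,1)` with derivative `ψ'`.  Let `E₁, …, Eₙ` be i.i.d. standard
exponentials independent of `Z` and set `Uᵢ = φ(Eᵢ/Z)`.  Then `U = (U₁,…,Uₙ)` has joint
density `c(u) = φ⁽ⁿ⁾(ψ(u₁)+⋯+ψ(uₙ)) ∏ᵢ ψ'(uᵢ)` on `(0,1)ⁿ`, where `φ⁽ⁿ⁾` is the `n`-th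
derivative of `φ` (which satisfies `φ⁽ᵏ⁾(s) = E[(-Z)ᵏ e^{-sZ}]` for `s > 0`): for every
Borel `B ⊆ (0,1)ⁿ`, `P(U ∈ B) = ∫_B c(u) du`. -/
theorem marshallOlkin_joint_density
    {Ω : Type*} [MeasurableSpace Ω] (P : Measure Ω) [IsProbabilityMeasure P]
    (n : ℕ)
    (Z : Ω → ℝ) (hZmeas : Measurable Z) (hZpos : ∀ ω, 0 < Z ω)
    (hZmom : Integrable (fun ω => Z ω ^ n) P)
    (φ ψ ψ' : ℝ → ℝ)
    (hφ : ∀ s : ℝ, 0 ≤ s → φ s = ∫ ω, Real.exp (-s * Z ω) ∂P)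
    (hφderiv : ∀ k ≤ n, ∀ s : ℝ, 0 < s →
      iteratedDeriv k φ s = ∫ ω, (-Z ω) ^ k * Real.exp (-s * Z ω) ∂P)
    (hφψ : ∀ u ∈ Set.Ioc (0 : ℝ) 1, φ (ψ u) = u)
    (hψφ : ∀ s : ℝ, 0 ≤ s → ψ (φ s) = s)
    (hψ_nonneg : ∀ u ∈ Set.Ioc (0 : ℝ) 1, 0 ≤ ψ u)
    (hψ_deriv : ∀ u ∈ Set.Ioo (0 : ℝ) 1, HasDerivAt ψ (ψ' u) u)
    (hψ'_cont : ContinuousOn ψ' (Set.Ioo (0 : ℝ) 1))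
    (E : Fin n → Ω → ℝ) (hEmeas : ∀ i, Measurable (E i))
    (hEexp : ∀ i, Measure.map (E i) P = expMeasure 1)
    (hindep : iIndepFun
      (fun o : Option (Fin n) => o.elim Z E) P) :
    ∀ B : Set (Fin n → ℝ), MeasurableSet B →
      B ⊆ Set.univ.pi (fun _ => Set.Ioo (0 : ℝ) 1) →
      P {ω | (fun i => φ (E i ω / Z ω)) ∈ B} =
        ENNReal.ofReal (∫ u in B,
          iteratedDeriv n φ (∑ i, ψ (u i)) * ∏ i, ψ' (u i)) :=
  marshallOlkin_joint_density_general P n Z hZmeas hZpos hZmom φ ψ ψ' hφ hφderiv hφψ hψφ hψ_nonneg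
    hψ_deriv E hEmeas hEexp hindep
end

section
/- Define k_AK : ℝ → [0,∞] by k_AK(s) = ∑_{i=1}^{n} ∫_{ℝ^{n−1}} f(y₁, …, y_{i−1}, s − ∑_{j≠i} y_j, y_{i+1}, …, yₙ) · 1{ max_{j≠i} y_j ≤ s − ∑_{j≠i} y_j } dy_{−i}, where dy_{−i} denotes integration over all coordinates except the i-th. Then k_AK is a probability density of the sum S = X₁ + ⋯ + Xₙ: for every s ∈ ℝ, μ({x ∈ ℝⁿ : x₁ + ⋯ + xₙ ≤ s}) = ∫_{−∞}^{s} k_AK(t) dt. (This shows the Asmussen–Kroese density estimator is unbiased.) -/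
/-!
Almost every point of `ℝⁿ` has pairwise distinct coordinates, so up to a null set the regions
`{x | x i = maxⱼ x j}` partition `ℝⁿ`, and `μ {∑ x ≤ s}` splits into `n` integrals of `f` over
`{x | x i = maxⱼ x j, ∑ x ≤ s}`. On the `i`-th region, the change of variables
`x ↦ (∑ x, (x j)_{j ≠ i})` has Jacobian `1`; integrating out the coordinates `j ≠ i` first
(Tonelli) turns the `i`-th integral into `∫_{-∞}^s` of the `i`-th summand of `k_AK`.
-/

open MeasureTheory
open scoped ENNReal

section FunSplitAt

variable {ι : Type*} [DecidableEq ι]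

noncomputable def MeasurableEquiv.funSplitAt (i : ι) (α : Type*) [MeasurableSpace α] :
    (ι → α) ≃ᵐ α × ({j // j ≠ i} → α) :=
  (MeasurableEquiv.piEquivPiSubtypeProd (fun _ => α) (· = i)).trans
    ((MeasurableEquiv.funUnique {j // j = i} α).prodCongr (.refl _))

namespace MeasurableEquiv

variable {α : Type*} [MeasurableSpace α]

theorem funSplitAt_symm_apply (i : ι) (u : α) (y : {j // j ≠ i} → α) :
    (funSplitAt i α).symm (u, y) = fun j => if hj : j = i then u else y ⟨j, hj⟩ :=
  rfl

theorem sum_funSplitAt_symm_apply [Fintype ι] [AddCommMonoid α] (i : ι) (u : α)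
    (y : {j // j ≠ i} → α) :
    ∑ j, (funSplitAt i α).symm (u, y) j = u + ∑ j, y j := by
  rw [Fintype.sum_eq_add_sum_subtype_ne _ i]
  exact congrArg₂ (· + ·) (dif_pos rfl) (Finset.sum_congr rfl fun j _ => dif_neg j.2)

theorem forall_funSplitAt_symm_apply_le_iff [Preorder α] (i : ι) (u : α)
    (y : {j // j ≠ i} → α) :
    (∀ j, (funSplitAt i α).symm (u, y) j ≤ (funSplitAt i α).symm (u, y) i) ↔ ∀ j, y j ≤ u := by
  simp only [funSplitAt_symm_apply, dite_true]
  refine ⟨fun h j => by simpa [j.2] using h j, fun h j => ?_⟩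
  by_cases hj : j = i
  · simp [hj]
  · simpa [hj] using h ⟨j, hj⟩

end MeasurableEquiv

theorem MeasureTheory.volume_preserving_funSplitAt [Fintype ι] (i : ι) (α : Type*)
    [MeasureSpace α] [SigmaFinite (volume : Measure α)] :
    MeasurePreserving (MeasurableEquiv.funSplitAt i α) := by
  have h₁ := volume_preserving_piEquivPiSubtypeProd (fun _ : ι => α) (· = i)
  rw [Subsingleton.elim (Subtype.fintype _) (Unique.fintype : Fintype {j // j = i})] at h₁
  have h₂ := (volume_preserving_funUnique {j // j = i} α).prod
    (MeasurePreserving.id (volume : Measure ({j // j ≠ i} → α)))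
  rw [← Measure.volume_eq_prod] at h₂
  exact h₂.comp h₁

end FunSplitAt

variable {ι : Type*} [Fintype ι]

theorem measurableSet_setOf_forall_apply_le (i : ι) :
    MeasurableSet {x : ι → ℝ | ∀ j, x j ≤ x i} := by
  measurability

section Argmax

theorem sum_indicator_setOf_forall_apply_le_of_injective {α M : Type*} [Nonempty ι]
    [LinearOrder α] [AddCommMonoid M] (g : (ι → α) → M) {x : ι → α}
    (hx : Function.Injective x) :
    ∑ i, {x : ι → α | ∀ j, x j ≤ x i}.indicator g x = g x := by
  obtain ⟨i₀, hi₀⟩ := Finite.exists_max x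
  have hunique : ∀ j ≠ i₀, x ∉ {x : ι → α | ∀ k, x k ≤ x j} :=
    fun j hj hxj => hj (hx (le_antisymm (hi₀ j) (hxj i₀)))
  rw [Finset.sum_eq_single i₀ (fun j _ hj => Set.indicator_of_notMem (hunique j hj) g)
    (by simp), Set.indicator_of_mem (by exact hi₀)]

theorem volume_setOf_apply_eq_apply {a b : ι} (hab : a ≠ b) :
    volume {x : ι → ℝ | x a = x b} = 0 := by
  classical
  have hker : {x : ι → ℝ | x a = x b}
      = LinearMap.ker ((LinearMap.proj a : (ι → ℝ) →ₗ[ℝ] ℝ) - LinearMap.proj b) := by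
    ext x; simp [sub_eq_zero]
  rw [hker]
  refine Measure.addHaar_submodule _ _ fun htop => ?_
  have h := LinearMap.congr_fun (LinearMap.ker_eq_top.1 htop) (Pi.single a 1)
  simp [hab] at h

theorem ae_injective_volume : ∀ᵐ x : ι → ℝ, Function.Injective x := by
  have hpair : ∀ a b : ι, ∀ᵐ x : ι → ℝ, x a = x b → a = b := by
    intro a b
    by_cases hab : a = b
    · exact .of_forall fun _ _ => hab
    · filter_upwards [measure_eq_zero_iff_ae_notMem.1 (volume_setOf_apply_eq_apply hab)]
        with x hx h using absurd h hx
  filter_upwards [ae_all_iff.2 fun a => ae_all_iff.2 (hpair a)] with x hx a b using hx a b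

theorem lintegral_eq_sum_setLIntegral_setOf_forall_apply_le [Nonempty ι]
    {μ : Measure (ι → ℝ)} (hμ : ∀ᵐ x ∂μ, Function.Injective x) {g : (ι → ℝ) → ℝ≥0∞}
    (hg : Measurable g) :
    ∫⁻ x, g x ∂μ = ∑ i, ∫⁻ x in {x | ∀ j, x j ≤ x i}, g x ∂μ := by
  have hA := measurableSet_setOf_forall_apply_le (ι := ι)
  calc ∫⁻ x, g x ∂μ = ∫⁻ x, ∑ i, {x : ι → ℝ | ∀ j, x j ≤ x i}.indicator g x ∂μ :=
        lintegral_congr_ae (hμ.mono fun x hx =>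
          (sum_indicator_setOf_forall_apply_le_of_injective g hx).symm)
    _ = ∑ i, ∫⁻ x, {x : ι → ℝ | ∀ j, x j ≤ x i}.indicator g x ∂μ :=
        lintegral_finsetSum _ fun i _ => hg.indicator (hA i)
    _ = ∑ i, ∫⁻ x in {x | ∀ j, x j ≤ x i}, g x ∂μ :=
        Finset.sum_congr rfl fun i _ => lintegral_indicator (hA i) g

end Argmax

section Slices

variable [DecidableEq ι]

theorem lintegral_eq_lintegral_lintegral_funSplitAt_symm_sub_sum {g : (ι → ℝ) → ℝ≥0∞}
    (hg : Measurable g) (i : ι) :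
    ∫⁻ x, g x = ∫⁻ t, ∫⁻ y, g ((MeasurableEquiv.funSplitAt i ℝ).symm (t - ∑ j, y j, y)) := by
  set e := MeasurableEquiv.funSplitAt i ℝ
  have hge : Measurable fun p => g (e.symm p) := hg.comp e.symm.measurable
  calc ∫⁻ x, g x = ∫⁻ p, g (e.symm p) :=
        (((volume_preserving_funSplitAt i ℝ).symm e).lintegral_comp_emb
          e.symm.measurableEmbedding g).symm
    _ = ∫⁻ u, ∫⁻ y, g (e.symm (u, y)) := by
        rw [Measure.volume_eq_prod]; exact lintegral_prod _ hge.aemeasurable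
    _ = ∫⁻ y, ∫⁻ u, g (e.symm (u, y)) := lintegral_lintegral_swap hge.aemeasurable
    _ = ∫⁻ y, ∫⁻ t, g (e.symm (t - ∑ j, y j, y)) := lintegral_congr fun y =>
        (lintegral_sub_right_eq_self (fun u => g (e.symm (u, y))) _).symm
    _ = ∫⁻ t, ∫⁻ y, g (e.symm (t - ∑ j, y j, y)) :=
        lintegral_lintegral_swap (by fun_prop)

/-- The `i`-th summand of the Asmussen–Kroese density `k_AK`, for the density `g`. -/
noncomputable def maxSliceDensity (g : (ι → ℝ) → ℝ≥0∞) (i : ι) (t : ℝ) : ℝ≥0∞ :=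
  ∫⁻ y in {y : {j // j ≠ i} → ℝ | ∀ j, y j ≤ t - ∑ j', y j'},
    g ((MeasurableEquiv.funSplitAt i ℝ).symm (t - ∑ j', y j', y))

theorem maxSliceDensity_eq_lintegral_indicator (g : (ι → ℝ) → ℝ≥0∞) (i : ι) (t : ℝ) :
    maxSliceDensity g i t = ∫⁻ y, {x : ι → ℝ | ∀ j, x j ≤ x i}.indicator g
      ((MeasurableEquiv.funSplitAt i ℝ).symm (t - ∑ j, y j, y)) := by
  have hS : MeasurableSet {y : {j // j ≠ i} → ℝ | ∀ j, y j ≤ t - ∑ j', y j'} := by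
    measurability
  rw [maxSliceDensity, ← lintegral_indicator hS]
  refine lintegral_congr fun y => ?_
  simp only [Set.indicator_apply, Set.mem_ofPred_eq,
    MeasurableEquiv.forall_funSplitAt_symm_apply_le_iff]

theorem measurable_maxSliceDensity {g : (ι → ℝ) → ℝ≥0∞} (hg : Measurable g) (i : ι) :
    Measurable (maxSliceDensity g i) := by
  simp_rw [funext (maxSliceDensity_eq_lintegral_indicator g i)]
  have hA := measurableSet_setOf_forall_apply_le i
  exact Measurable.lintegral_prod_right' (f := fun p : ℝ × ({j // j ≠ i} → ℝ) =>
    {x | ∀ j, x j ≤ x i}.indicator g ((MeasurableEquiv.funSplitAt i ℝ).symm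
      (p.1 - ∑ j, p.2 j, p.2)))
    (by fun_prop (disch := exact hA))

theorem setLIntegral_inter_sum_preimage_eq_setLIntegral_maxSliceDensity
    {g : (ι → ℝ) → ℝ≥0∞} (hg : Measurable g) (i : ι) {T : Set ℝ} (hT : MeasurableSet T) :
    ∫⁻ x in {x | ∀ j, x j ≤ x i} ∩ (fun x => ∑ j, x j) ⁻¹' T, g x
      = ∫⁻ t in T, maxSliceDensity g i t := by
  have hA := measurableSet_setOf_forall_apply_le i
  have hB : MeasurableSet ((fun x : ι → ℝ => ∑ j, x j) ⁻¹' T) :=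
    (by fun_prop : Measurable _) hT
  rw [← lintegral_indicator (hA.inter hB), ← lintegral_indicator hT,
    lintegral_eq_lintegral_lintegral_funSplitAt_symm_sub_sum (hg.indicator (hA.inter hB)) i]
  refine lintegral_congr fun t => ?_
  rw [← Set.inter_comm, ← Set.indicator_indicator]
  by_cases ht : t ∈ T
  · simp [ht, maxSliceDensity_eq_lintegral_indicator,
      MeasurableEquiv.sum_funSplitAt_symm_apply]
  · simp [ht, MeasurableEquiv.sum_funSplitAt_symm_apply]

end Slices

theorem asmussenKroese_density_unbiased_general
    (n : ℕ) (hn : 2 ≤ n)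
    (f : (Fin n → ℝ) → ℝ)
    (hf_meas : Measurable f)
    (μ : Measure (Fin n → ℝ))
    (hμ : μ = volume.withDensity (fun x => ENNReal.ofReal (f x)))
    (kAK : ℝ → ENNReal)
    (hkAK : ∀ s : ℝ, kAK s = ∑ i : Fin n,
      ∫⁻ y in {y : {j : Fin n // j ≠ i} → ℝ | ∀ j, y j ≤ s - ∑ j', y j'},
        ENNReal.ofReal (f (fun j : Fin n =>
          if hj : j = i then s - ∑ j', y j' else y ⟨j, hj⟩))) :
    ∀ s : ℝ, μ {x | ∑ i, x i ≤ s} = ∫⁻ t in Set.Iic s, kAK t := by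
  intro s
  have : Nonempty (Fin n) := ⟨⟨0, by omega⟩⟩
  set g : (Fin n → ℝ) → ℝ≥0∞ := fun x => ENNReal.ofReal (f x)
  have hg : Measurable g := hf_meas.ennreal_ofReal
  have hB : MeasurableSet {x : Fin n → ℝ | ∑ i, x i ≤ s} :=
    measurableSet_le (by fun_prop) measurable_const
  calc μ {x | ∑ i, x i ≤ s} = ∫⁻ x in {x | ∑ i, x i ≤ s}, g x := by
        rw [hμ, withDensity_apply _ hB]
    _ = ∑ i, ∫⁻ x in {x | ∀ j, x j ≤ x i} ∩ (fun x => ∑ j, x j) ⁻¹' Set.Iic s, g x := by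
        rw [lintegral_eq_sum_setLIntegral_setOf_forall_apply_le
          (ae_restrict_of_ae ae_injective_volume) hg]
        simp only [Measure.restrict_restrict (measurableSet_setOf_forall_apply_le _)]
        rfl
    _ = ∑ i, ∫⁻ t in Set.Iic s, maxSliceDensity g i t :=
        Finset.sum_congr rfl fun i _ =>
          setLIntegral_inter_sum_preimage_eq_setLIntegral_maxSliceDensity hg i measurableSet_Iic
    _ = ∫⁻ t in Set.Iic s, ∑ i, maxSliceDensity g i t :=
        (lintegral_finsetSum _ fun i _ => measurable_maxSliceDensity hg i).symm
    _ = ∫⁻ t in Set.Iic s, kAK t := lintegral_congr fun t => (hkAK t).symm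

/-- Let `n ≥ 2`, let `f` be a probability density on `ℝⁿ` and `μ` the
law of `X ∼ f`.  Define `k_AK : ℝ → [0,∞]` by
`k_AK(s) = ∑ᵢ ∫_{ℝⁿ⁻¹} f(y with value s - ∑_{j≠i} y_j in slot i) · 1{max_{j≠i} y_j ≤ s - ∑_{j≠i} y_j} dy_{-i}`.
Then `k_AK` is a probability density of `S = X₁ + ⋯ + Xₙ`: for every `s`,
`μ{x : ∑ xᵢ ≤ s} = ∫_{-∞}^s k_AK(t) dt`.  (Unbiasedness of the Asmussen–Kroese
density estimator.) -/
theorem asmussenKroese_density_unbiased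
    (n : ℕ) (hn : 2 ≤ n)
    (f : (Fin n → ℝ) → ℝ)
    (hf_nonneg : ∀ x, 0 ≤ f x)
    (hf_meas : Measurable f)
    (hf_prob : ∫ x, f x = 1)
    (μ : Measure (Fin n → ℝ))
    (hμ : μ = volume.withDensity (fun x => ENNReal.ofReal (f x)))
    (kAK : ℝ → ENNReal)
    (hkAK : ∀ s : ℝ, kAK s = ∑ i : Fin n,
      ∫⁻ y in {y : {j : Fin n // j ≠ i} → ℝ | ∀ j, y j ≤ s - ∑ j', y j'},
        ENNReal.ofReal (f (fun j : Fin n =>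
          if hj : j = i then s - ∑ j', y j' else y ⟨j, hj⟩))) :
    ∀ s : ℝ, μ {x | ∑ i, x i ≤ s} = ∫⁻ t in Set.Iic s, kAK t :=
  asmussenKroese_density_unbiased_general n hn f hf_meas μ hμ kAK hkAK
end
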